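/- arXiv:2402.07193 — 9 statements merged into one kernel-verified Lean document; each statement's English description precedes it below -/
import Mathlib

section
/- Gradient and covariance transformation under an exponential symmetry: let A ∈ ℝ^{n×n} be symmetric, let Z be a finite dataset, and suppose each per-sample loss ℓ(·, z) : ℝ^n → ℝ is differentiable and satisfies ℓ(exp(λA) θ, z) = ℓ(θ, z) for all λ ∈ ℝ, θ ∈ ℝ^n, z ∈ Z. Then for every λ and θ: (i) ∇ℓ(exp(λA) θ, z) = exp(−λA) ∇ℓ(θ, z) for each z; (ii) the gradient covariance satisfies Σ(exp(λA) θ) = exp(−λA) Σ(θ) exp(−λA); and (iii) Tr[Σ(exp(λA) θ) A] = Tr[exp(−2λA) Σ(θ) A]. -/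
open scoped RealInnerProductSpace

noncomputable def matAct {n : ℕ} (M : Matrix (Fin n) (Fin n) ℝ)
    (θ : EuclideanSpace ℝ (Fin n)) : EuclideanSpace ℝ (Fin n) :=
  (EuclideanSpace.equiv (Fin n) ℝ).symm (M.mulVec (EuclideanSpace.equiv (Fin n) ℝ θ))

/-!
Invariance under `exp (-λA)` and the chain rule give `∇ℓ(y) = exp(-λA)ᵀ ∇ℓ(exp(-λA) y)`; at
`y = exp(λA) θ`, with `exp(-λA)` symmetric, this is (i). The mean loss `L` inherits the
invariance, so its gradient transforms in the same way, and `Σ`, a combination of outer products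
of these gradients, is conjugated by `exp(-λA)`, which is (ii). As `exp(-λA)` commutes with `A`,
cyclicity of the trace turns (ii) into (iii).
-/

open NormedSpace Matrix

section Gradient

variable {E F : Type*} [NormedAddCommGroup E] [InnerProductSpace ℝ E] [CompleteSpace E]
  [NormedAddCommGroup F] [InnerProductSpace ℝ F] [CompleteSpace F]

theorem gradient_comp_continuousLinearMap {f : F → ℝ} (T : E →L[ℝ] F) {x : E}
    (hf : DifferentiableAt ℝ f (T x)) :
    gradient (f ∘ T) x = ContinuousLinearMap.adjoint T (gradient f (T x)) := by
  refine ext_inner_right ℝ fun v => ?_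
  rw [inner_gradient_left, ContinuousLinearMap.adjoint_inner_left, inner_gradient_left,
    fderiv_comp x hf T.differentiableAt, ContinuousLinearMap.fderiv]
  rfl

theorem gradient_eq_adjoint_of_comp_eq {f : E → ℝ} {T : E →L[ℝ] E} (hfT : f ∘ T = f) {x : E}
    (hf : DifferentiableAt ℝ f (T x)) :
    gradient f x = ContinuousLinearMap.adjoint T (gradient f (T x)) := by
  conv_lhs => rw [← hfT]
  exact gradient_comp_continuousLinearMap T hf

end Gradient

theorem matAct_eq_toEuclideanCLM {n : ℕ} (M : Matrix (Fin n) (Fin n) ℝ) :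
    matAct M = Matrix.toEuclideanCLM (𝕜 := ℝ) M := rfl

theorem Matrix.IsSymm.adjoint_toEuclideanCLM {ι : Type*} [Fintype ι] [DecidableEq ι]
    {M : Matrix ι ι ℝ} (hM : M.IsSymm) :
    ContinuousLinearMap.adjoint (toEuclideanCLM (𝕜 := ℝ) M) = toEuclideanCLM (𝕜 := ℝ) M := by
  rw [← ContinuousLinearMap.star_eq_adjoint, ← map_star, star_eq_conjTranspose,
    conjTranspose_eq_transpose_of_trivial, hM.eq]

theorem Matrix.exp_smul_add_smul {ι : Type*} [Fintype ι] [DecidableEq ι] (A : Matrix ι ι ℝ)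
    (s t : ℝ) : exp ((s + t) • A) = exp (s • A) * exp (t • A) := by
  rw [add_smul, Matrix.exp_add_of_commute _ _ ((Commute.refl A).smul_left s |>.smul_right t)]

theorem Matrix.exp_neg_smul_mul_exp_smul {ι : Type*} [Fintype ι] [DecidableEq ι]
    (A : Matrix ι ι ℝ) (t : ℝ) : exp ((-t) • A) * exp (t • A) = 1 := by
  rw [← exp_smul_add_smul, neg_add_cancel, zero_smul, exp_zero]

theorem matAct_exp_neg_smul_matAct_exp_smul {n : ℕ} (A : Matrix (Fin n) (Fin n) ℝ) (t : ℝ)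
    (θ : EuclideanSpace ℝ (Fin n)) :
    matAct (exp ((-t) • A)) (matAct (exp (t • A)) θ) = θ := by
  rw [matAct_eq_toEuclideanCLM, matAct_eq_toEuclideanCLM, ← mul_apply_eq_comp,
    ← map_mul, exp_neg_smul_mul_exp_smul, map_one, one_apply_eq_self]

theorem gradient_matAct_exp_smul_of_invariant {n : ℕ} {A : Matrix (Fin n) (Fin n) ℝ}
    (hA : A.IsSymm) {f : EuclideanSpace ℝ (Fin n) → ℝ}
    (hinv : ∀ (t : ℝ) θ, f (matAct (exp (t • A)) θ) = f θ) (t : ℝ) {θ : EuclideanSpace ℝ (Fin n)}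
    (hf : DifferentiableAt ℝ f θ) :
    gradient f (matAct (exp (t • A)) θ) = matAct (exp ((-t) • A)) (gradient f θ) := by
  have hfT : f ∘ toEuclideanCLM (𝕜 := ℝ) (exp ((-t) • A)) = f := funext (hinv (-t))
  have hθ : toEuclideanCLM (𝕜 := ℝ) (exp ((-t) • A)) (matAct (exp (t • A)) θ) = θ :=
    matAct_exp_neg_smul_matAct_exp_smul A t θ
  rw [gradient_eq_adjoint_of_comp_eq hfT (by rwa [hθ]), hθ,
    (hA.smul (-t)).exp.adjoint_toEuclideanCLM]
  rfl

section Covariance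

variable {ι Z R : Type*} [Fintype Z] [CommRing R]

theorem Matrix.of_mul_sum_sub_eq_vecMulVec (c : R) (u : Z → ι → R) (w : ι → R) :
    Matrix.of (fun i j => c * ∑ z, u z i * u z j - w i * w j)
      = c • ∑ z, vecMulVec (u z) (u z) - vecMulVec w w := by
  ext i j
  simp [vecMulVec_apply, Matrix.sum_apply]

theorem Matrix.of_mul_sum_sub_mulVec [Fintype ι] (M : Matrix ι ι R) (c : R) (u : Z → ι → R)
    (w : ι → R) :
    Matrix.of (fun i j => c * ∑ z, (M *ᵥ u z) i * (M *ᵥ u z) j - (M *ᵥ w) i * (M *ᵥ w) j)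
      = M * Matrix.of (fun i j => c * ∑ z, u z i * u z j - w i * w j) * Mᵀ := by
  rw [of_mul_sum_sub_eq_vecMulVec, of_mul_sum_sub_eq_vecMulVec]
  simp only [Matrix.mul_sub, Matrix.sub_mul, mul_smul_comm, smul_mul_assoc, Finset.mul_sum,
    Finset.sum_mul, mul_vecMulVec, vecMulVec_mul, vecMul_transpose]

end Covariance

theorem Matrix.trace_mul_mul_mul_of_commute {ι R : Type*} [Fintype ι] [CommRing R]
    {F A : Matrix ι ι R} (h : Commute F A) (S : Matrix ι ι R) :
    (F * S * F * A).trace = (F * F * S * A).trace := by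
  rw [Matrix.mul_assoc, h.eq, ← Matrix.mul_assoc, trace_mul_comm, ← Matrix.mul_assoc,
    ← Matrix.mul_assoc]

theorem exponential_symmetry_gradient_covariance_general {n : ℕ} {Z : Type*} [Fintype Z]
    (A : Matrix (Fin n) (Fin n) ℝ) (hA : A.IsSymm)
    (ℓ : Z → EuclideanSpace ℝ (Fin n) → ℝ) (hℓ : ∀ z, Differentiable ℝ (ℓ z))
    (hsym : ∀ (l : ℝ) (θ : EuclideanSpace ℝ (Fin n)) (z : Z),
      ℓ z (matAct (NormedSpace.exp (l • A)) θ) = ℓ z θ)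
    (L : EuclideanSpace ℝ (Fin n) → ℝ)
    (hL : ∀ θ, L θ = (1 / (Fintype.card Z : ℝ)) * ∑ z : Z, ℓ z θ)
    (Sig : EuclideanSpace ℝ (Fin n) → Matrix (Fin n) (Fin n) ℝ)
    (hSig : ∀ θ, Sig θ = Matrix.of fun i j =>
      (1 / (Fintype.card Z : ℝ)) * ∑ z : Z, gradient (ℓ z) θ i * gradient (ℓ z) θ j
        - gradient L θ i * gradient L θ j) :
    ∀ (l : ℝ) (θ : EuclideanSpace ℝ (Fin n)),
      (∀ z : Z, gradient (ℓ z) (matAct (NormedSpace.exp (l • A)) θ)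
          = matAct (NormedSpace.exp ((-l) • A)) (gradient (ℓ z) θ))
      ∧ Sig (matAct (NormedSpace.exp (l • A)) θ)
          = NormedSpace.exp ((-l) • A) * Sig θ * NormedSpace.exp ((-l) • A)
      ∧ (Sig (matAct (NormedSpace.exp (l • A)) θ) * A).trace
          = (NormedSpace.exp ((-(2 * l)) • A) * Sig θ * A).trace := by
  intro l θ
  have hgrad (z : Z) := gradient_matAct_exp_smul_of_invariant hA (hsym · · z) l (hℓ z θ)
  have hLinv (t : ℝ) (x : EuclideanSpace ℝ (Fin n)) : L (matAct (exp (t • A)) x) = L x := by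
    simp only [hL, hsym]
  have hLdiff : DifferentiableAt ℝ L θ := by
    rw [funext hL]
    fun_prop
  have hcov : Sig (matAct (exp (l • A)) θ) = exp ((-l) • A) * Sig θ * exp ((-l) • A) := by
    rw [hSig, hSig]
    simp only [hgrad, gradient_matAct_exp_smul_of_invariant hA hLinv l hLdiff]
    exact (of_mul_sum_sub_mulVec _ _ (fun z => (gradient (ℓ z) θ).ofLp) (gradient L θ).ofLp).trans
      (by rw [(hA.smul (-l)).exp.eq])
  refine ⟨hgrad, hcov, ?_⟩
  rw [hcov, two_mul, neg_add, exp_smul_add_smul,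
    trace_mul_mul_mul_of_commute (((Commute.refl A).smul_left (-l)).exp_left)]

/-- Gradient and covariance transformation under an exponential symmetry: if every
per-sample loss satisfies `ℓ (exp (λA) θ) z = ℓ θ z` for a symmetric `A`, then
(i) gradients transform as `∇ℓ(exp(λA)θ) = exp(−λA) ∇ℓ(θ)`,
(ii) the gradient covariance satisfies `Σ(exp(λA)θ) = exp(−λA) Σ(θ) exp(−λA)`, and
(iii) `Tr[Σ(exp(λA)θ) A] = Tr[exp(−2λA) Σ(θ) A]`. -/
theorem exponential_symmetry_gradient_covariance {n : ℕ} {Z : Type*} [Fintype Z] [Nonempty Z]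
    (A : Matrix (Fin n) (Fin n) ℝ) (hA : A.IsSymm)
    (ℓ : Z → EuclideanSpace ℝ (Fin n) → ℝ) (hℓ : ∀ z, Differentiable ℝ (ℓ z))
    (hsym : ∀ (l : ℝ) (θ : EuclideanSpace ℝ (Fin n)) (z : Z),
      ℓ z (matAct (NormedSpace.exp (l • A)) θ) = ℓ z θ)
    (L : EuclideanSpace ℝ (Fin n) → ℝ)
    (hL : ∀ θ, L θ = (1 / (Fintype.card Z : ℝ)) * ∑ z : Z, ℓ z θ)
    (Sig : EuclideanSpace ℝ (Fin n) → Matrix (Fin n) (Fin n) ℝ)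
    (hSig : ∀ θ, Sig θ = Matrix.of fun i j =>
      (1 / (Fintype.card Z : ℝ)) * ∑ z : Z, gradient (ℓ z) θ i * gradient (ℓ z) θ j
        - gradient L θ i * gradient L θ j) :
    ∀ (l : ℝ) (θ : EuclideanSpace ℝ (Fin n)),
      (∀ z : Z, gradient (ℓ z) (matAct (NormedSpace.exp (l • A)) θ)
          = matAct (NormedSpace.exp ((-l) • A)) (gradient (ℓ z) θ))
      ∧ Sig (matAct (NormedSpace.exp (l • A)) θ)
          = NormedSpace.exp ((-l) • A) * Sig θ * NormedSpace.exp ((-l) • A)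
      ∧ (Sig (matAct (NormedSpace.exp (l • A)) θ) * A).trace
          = (NormedSpace.exp ((-(2 * l)) • A) * Sig θ * A).trace :=
  exponential_symmetry_gradient_covariance_general A hA ℓ hℓ hsym L hL Sig hSig
end

section
/- Monotonicity along the degenerate direction (part (1) of the fixed point theorem): let A ∈ ℝ^{n×n} be symmetric, Σ₀ ∈ ℝ^{n×n} positive semidefinite, θ ∈ ℝ^n, γ ≥ 0 and σ² ≥ 0. Define C(λ) = θ^⊤ A exp(2λA) θ and G(λ) = −4γ C(λ) + σ² Tr[exp(−2λA) Σ₀ A]. Then λ ↦ C(λ) is monotonically nondecreasing on ℝ and λ ↦ G(λ) is monotonically nonincreasing on ℝ. -/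
/-!
Both the charge and the trace term of the drift have the form `s ↦ tr (exp (s • A) * P * A)`
with `P` positive semidefinite (`P = θ θᵀ` at `s = 2λ`, `P = S0` at `s = -2λ`). Its derivative
`tr (exp (s • A) * (A * P * A))` is the trace of a product of two positive semidefinite
matrices (`exp (s • A)` is the square of the Hermitian matrix `exp ((s / 2) • A)`), hence
nonnegative. So the charge is monotone, and the drift, a nonpositive multiple of the charge plus
a nonnegative multiple of an antitone term, is antitone.
-/

open Matrix
open scoped Matrix.Norms.Operator ComplexOrder

namespace Matrix

variable {ι 𝕜 : Type*} [Fintype ι] [DecidableEq ι] [RCLike 𝕜]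

omit [DecidableEq ι] in
theorem dotProduct_mulVec_eq_trace_mul_vecMulVec {R : Type*} [CommSemiring R]
    (M : Matrix ι ι R) (x y : ι → R) : x ⬝ᵥ M *ᵥ y = trace (M * vecMulVec y x) := by
  rw [mul_vecMulVec, trace_vecMulVec, dotProduct_comm]

theorem PosSemidef.trace_mul_nonneg {P Q : Matrix ι ι 𝕜} (hP : P.PosSemidef)
    (hQ : Q.PosSemidef) : 0 ≤ trace (P * Q) := by
  open scoped MatrixOrder in
  obtain ⟨B, rfl⟩ := CStarAlgebra.nonneg_iff_eq_star_mul_self.mp hP.nonneg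
  rw [Matrix.mul_assoc, trace_mul_comm]
  exact (hQ.mul_mul_conjTranspose_same B).trace_nonneg

theorem IsHermitian.posSemidef_exp {A : Matrix ι ι 𝕜} (hA : A.IsHermitian) :
    (NormedSpace.exp A).PosSemidef := by
  set B := NormedSpace.exp ((2⁻¹ : ℝ) • A)
  have hB : B.IsHermitian := (hA.smul (IsSelfAdjoint.all _)).exp
  have hsquare : NormedSpace.exp A = Bᴴ * B := by
    rw [hB.eq, ← exp_add_of_commute _ _ (Commute.refl _), ← add_smul]
    norm_num
  rw [hsquare]
  exact posSemidef_conjTranspose_mul_self B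

theorem monotone_trace_exp_smul_mul_mul {A P : Matrix ι ι ℝ} (hA : A.IsHermitian)
    (hP : P.PosSemidef) : Monotone fun s : ℝ => trace (NormedSpace.exp (s • A) * P * A) := by
  have hderiv (s : ℝ) : HasDerivAt (fun s : ℝ => trace (NormedSpace.exp (s • A) * P * A))
      (trace (NormedSpace.exp (s • A) * A * P * A)) s :=
    (traceLinearMap ι ℝ ℝ).toContinuousLinearMap.hasFDerivAt.comp_hasDerivAt s
      (((hasDerivAt_exp_smul_const A s).mul_const P).mul_const A)
  refine monotone_of_deriv_nonneg (fun s => (hderiv s).differentiableAt) fun s => ?_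
  rw [(hderiv s).deriv, Matrix.mul_assoc, Matrix.mul_assoc]
  refine (hA.smul (IsSelfAdjoint.all s)).posSemidef_exp.trace_mul_nonneg ?_
  simpa only [← Matrix.mul_assoc, hA.eq] using hP.conjTranspose_mul_mul_same A

end Matrix

/-- Monotonicity along the degenerate direction (part (1) of the fixed point theorem):
for symmetric `A`, positive semidefinite `S0`, `γ ≥ 0`, `σ² ≥ 0`, the Noether charge
`C(λ) = θᵀ A exp(2λA) θ` is nondecreasing in `λ` and the drift
`G(λ) = −4γ C(λ) + σ² Tr[exp(−2λA) S0 A]` is nonincreasing in `λ`. -/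
theorem noether_charge_monotone_drift_antitone {n : ℕ}
    (A S0 : Matrix (Fin n) (Fin n) ℝ) (hA : A.IsSymm) (hS0 : S0.PosSemidef)
    (θ : Fin n → ℝ) (γ σ2 : ℝ) (hγ : 0 ≤ γ) (hσ2 : 0 ≤ σ2)
    (C G : ℝ → ℝ)
    (hC : ∀ l : ℝ, C l = θ ⬝ᵥ (A * NormedSpace.exp ((2 * l) • A)).mulVec θ)
    (hG : ∀ l : ℝ, G l = -4 * γ * C l
        + σ2 * (NormedSpace.exp ((-(2 * l)) • A) * S0 * A).trace) :
    Monotone C ∧ Antitone G := by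
  have hA' : A.IsHermitian := isHermitian_iff_isSymm.mpr hA
  set T : ℝ → ℝ := fun l => trace (NormedSpace.exp ((-(2 * l)) • A) * S0 * A)
  have hC_mono : Monotone C := by
    have hC' :
        C = (fun s => trace (NormedSpace.exp (s • A) * vecMulVec θ θ * A)) ∘ (2 * ·) := by
      ext l
      rw [hC, dotProduct_mulVec_eq_trace_mul_vecMulVec, ← trace_mul_cycle]
      rfl
    rw [hC']
    exact (monotone_trace_exp_smul_mul_mul hA' (posSemidef_vecMulVec_self_star θ)).comp
      (monotone_id.const_mul zero_le_two)
  have hT_anti : Antitone T :=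
    (monotone_trace_exp_smul_mul_mul hA' hS0).comp_antitone (monotone_id.const_mul zero_le_two).neg
  have hG' : G = fun l => -4 * γ * C l + σ2 * T l := funext hG
  rw [hG']
  exact ⟨hC_mono, (hC_mono.const_mul_of_nonpos (by linarith)).add (hT_anti.const_mul hσ2)⟩
end

section
/- Existence and uniqueness of the noise equilibrium (parts (2)–(3) of the fixed point theorem): let A ∈ ℝ^{n×n} be symmetric and write A = A₊ + A₋ where A₊, A₋ are symmetric, A₊ is positive semidefinite, −A₋ is positive semidefinite, and A₊A₋ = A₋A₊ = 0. Let Σ₀ be positive semidefinite, θ ∈ ℝ^n, γ ≥ 0, σ² ≥ 0, and define G(λ) = −4γ θ^⊤ A exp(2λA) θ + σ² Tr[exp(−2λA) Σ₀ A]. If σ² Tr[Σ₀ A₊] − 4γ θ^⊤ A₋ θ > 0 and −σ² Tr[Σ₀ A₋] + 4γ θ^⊤ A₊ θ > 0, then G is strictly decreasing on ℝ, G(λ) → +∞ as λ → −∞, G(λ) → −∞ as λ → +∞, and there exists a unique λ* ∈ ℝ with G(λ*) = 0. -/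
/-! Diagonalise `A = U diag(μ) Uᵀ`. By uniqueness of the decomposition into positive and
negative parts, `A₊ = cfc (·⁺) A` and `A₋ = -cfc (·⁻) A`, and the drift becomes `G(λ) = F(-2λ)`
with `F(s) = ∑ⱼ cⱼ κⱼ exp(κⱼ s)`, where the exponents `κⱼ` run over `±μᵢ` and the weights
`σ² (UᵀS₀U)ᵢᵢ` and `4γ (Uᵀθ)ᵢ²` are nonnegative. Every summand `c κ exp(κ s)` is nondecreasing
in `s`, and the two nondegeneracy conditions say that some summand has `c > 0, κ > 0` and some
has `c > 0, κ < 0`: these force `F` to be strictly increasing with `F(±∞) = ±∞`, and the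
intermediate value theorem gives the unique zero. -/

open Matrix Filter

section ExpDerivSum

variable {ι : Type*} [Fintype ι]

lemma strictMono_mul_exp_mul {κ : ℝ} (hκ : κ ≠ 0) : StrictMono fun s => κ * Real.exp (κ * s) := by
  rcases hκ.lt_or_gt with hκ | hκ
  · exact fun s t hst => mul_lt_mul_of_neg_left
      (Real.exp_lt_exp.2 (mul_lt_mul_of_neg_left hst hκ)) hκ
  · exact fun s t hst => mul_lt_mul_of_pos_left
      (Real.exp_lt_exp.2 (mul_lt_mul_of_pos_left hst hκ)) hκ

lemma monotone_mul_exp_mul (κ : ℝ) : Monotone fun s => κ * Real.exp (κ * s) := by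
  rcases eq_or_ne κ 0 with rfl | hκ
  · simp [monotone_const]
  · exact (strictMono_mul_exp_mul hκ).monotone

/-- The derivative of `s ↦ ∑ j, c j * exp (κ j * s)`, a convex function when `c ≥ 0`. -/
noncomputable def expDerivSum (c κ : ι → ℝ) (s : ℝ) : ℝ :=
  ∑ j, c j * (κ j * Real.exp (κ j * s))

variable {c κ : ι → ℝ}

lemma expDerivSum_neg (c κ : ι → ℝ) (s : ℝ) :
    expDerivSum c (-κ) (-s) = -expDerivSum c κ s := by
  simp [expDerivSum, ← Finset.sum_neg_distrib]

lemma continuous_expDerivSum (c κ : ι → ℝ) : Continuous (expDerivSum c κ) := by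
  unfold expDerivSum; fun_prop

lemma exists_pos_pos_of_sum_mul_posPart_pos (h : 0 < ∑ j, c j * (κ j)⁺) :
    ∃ j, 0 < c j ∧ 0 < κ j := by
  obtain ⟨j, -, hj⟩ := Finset.exists_lt_of_sum_lt (s := .univ) (f := fun _ => 0)
    (g := fun j => c j * (κ j)⁺) (by simpa using h)
  have hcj : 0 < c j := pos_of_mul_pos_left hj (posPart_nonneg (κ j))
  exact ⟨j, hcj, posPart_pos_iff.1 (pos_of_mul_pos_right hj hcj.le)⟩

lemma strictMono_expDerivSum (hc : 0 ≤ c) (h : 0 < ∑ j, c j * (κ j)⁺) :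
    StrictMono (expDerivSum c κ) := fun _ _ hst => by
  obtain ⟨j, hcj, hκj⟩ := exists_pos_pos_of_sum_mul_posPart_pos h
  exact Finset.sum_lt_sum
    (fun i _ => mul_le_mul_of_nonneg_left (monotone_mul_exp_mul (κ i) hst.le) (hc i))
    ⟨j, Finset.mem_univ j, mul_lt_mul_of_pos_left (strictMono_mul_exp_mul hκj.ne' hst) hcj⟩

lemma tendsto_expDerivSum_atTop (hc : 0 ≤ c) (h : 0 < ∑ j, c j * (κ j)⁺) :
    Tendsto (expDerivSum c κ) atTop atTop := by
  classical
  obtain ⟨j, hcj, hκj⟩ := exists_pos_pos_of_sum_mul_posPart_pos h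
  have hterm : Tendsto (fun s => c j * (κ j * Real.exp (κ j * s))) atTop atTop :=
    ((Real.tendsto_exp_atTop.comp (tendsto_id.const_mul_atTop hκj)).const_mul_atTop hκj
      |>.const_mul_atTop hcj)
  have hrest : ∀ᶠ s in atTop, ∑ i ∈ Finset.univ.erase j, c i * (κ i * Real.exp (κ i * 0)) ≤
      ∑ i ∈ Finset.univ.erase j, c i * (κ i * Real.exp (κ i * s)) := by
    filter_upwards [eventually_ge_atTop 0] with s hs
    exact Finset.sum_le_sum fun i _ =>
      mul_le_mul_of_nonneg_left (monotone_mul_exp_mul (κ i) hs) (hc i)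
  refine (tendsto_atTop_add_left_of_le' _ _ hrest hterm).congr fun s => ?_
  exact Finset.sum_erase_add _ _ (Finset.mem_univ j)

lemma tendsto_expDerivSum_atBot (hc : 0 ≤ c) (h : 0 < ∑ j, c j * (κ j)⁻) :
    Tendsto (expDerivSum c κ) atBot atBot := by
  have hneg : Tendsto (expDerivSum c (-κ)) atTop atTop :=
    tendsto_expDerivSum_atTop hc (by simpa [posPart_neg] using h)
  refine (tendsto_neg_atTop_atBot.comp (hneg.comp tendsto_neg_atBot_atTop)).congr fun s => ?_
  simp [expDerivSum_neg]

end ExpDerivSum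

namespace Matrix

variable {ι : Type*} [Fintype ι] [DecidableEq ι]

namespace IsHermitian

variable {A : Matrix ι ι ℝ}

lemma exp_smul_eq_cfc (hA : A.IsHermitian) (t : ℝ) :
    NormedSpace.exp (t • A) = cfc (fun x => Real.exp (t * x)) A := by
  have hinv : (hA.eigenvectorUnitary : Matrix ι ι ℝ)⁻¹ =
      star (hA.eigenvectorUnitary : Matrix ι ι ℝ) :=
    inv_eq_left_inv (Unitary.star_mul_self_of_mem hA.eigenvectorUnitary.2)
  rw [hA.cfc_eq, IsHermitian.cfc]
  conv_lhs => rw [hA.spectral_theorem]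
  rw [← map_smul, Unitary.conjStarAlgAut_apply, Unitary.conjStarAlgAut_apply, ← hinv,
    exp_conj _ _ Unitary.isUnit_coe, ← diagonal_smul, exp_diagonal]
  congr 3
  funext i
  simp [Real.exp_eq_exp_ℝ]

lemma dotProduct_cfc_mulVec (hA : A.IsHermitian) (f : ℝ → ℝ) (θ : ι → ℝ) :
    θ ⬝ᵥ cfc f A *ᵥ θ =
      ∑ i, f (hA.eigenvalues i) * (star (hA.eigenvectorUnitary : Matrix ι ι ℝ) *ᵥ θ) i ^ 2 := by
  rw [hA.cfc_eq, IsHermitian.cfc, Unitary.conjStarAlgAut_apply, ← mulVec_mulVec, ← mulVec_mulVec,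
    dotProduct_mulVec, star_eq_conjTranspose, conjTranspose_eq_transpose_of_trivial,
    ← mulVec_transpose]
  simp only [dotProduct, mulVec_diagonal]
  exact Finset.sum_congr rfl fun i _ => by simp; ring

noncomputable def eigenDiag (hA : A.IsHermitian) (S : Matrix ι ι ℝ) (i : ι) : ℝ :=
  (star (hA.eigenvectorUnitary : Matrix ι ι ℝ) * S * hA.eigenvectorUnitary) i i

lemma eigenDiag_nonneg (hA : A.IsHermitian) {S : Matrix ι ι ℝ} (hS : S.PosSemidef) :
    0 ≤ hA.eigenDiag S := fun _ => (hS.conjTranspose_mul_mul_same _).diag_nonneg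

lemma trace_mul_cfc (hA : A.IsHermitian) (S : Matrix ι ι ℝ) (f : ℝ → ℝ) :
    (S * cfc f A).trace = ∑ i, f (hA.eigenvalues i) * hA.eigenDiag S i := by
  rw [hA.cfc_eq, IsHermitian.cfc, Unitary.conjStarAlgAut_apply, ← Matrix.mul_assoc,
    trace_mul_cycle, ← Matrix.mul_assoc, trace_mul_comm]
  simp [trace, eigenDiag, diagonal_mul]

lemma mul_exp_smul (hA : A.IsHermitian) (t : ℝ) :
    A * NormedSpace.exp (t • A) = cfc (fun x => x * Real.exp (t * x)) A := by
  rw [cfc_mul (fun x => x) (fun x => Real.exp (t * x)) A, cfc_id' ℝ A hA.isSelfAdjoint,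
    hA.exp_smul_eq_cfc]

lemma sum_sumElim_mul_eq_trace_add_dotProduct (hA : A.IsHermitian) (S : Matrix ι ι ℝ)
    (θ : ι → ℝ) (a b : ℝ) (f : ℝ → ℝ) :
    ∑ j, Sum.elim (a • hA.eigenDiag S)
        (b • (star (hA.eigenvectorUnitary : Matrix ι ι ℝ) *ᵥ θ) ^ 2) j *
        f (Sum.elim hA.eigenvalues (-hA.eigenvalues) j) =
      a * (S * cfc f A).trace + b * (θ ⬝ᵥ cfc (fun x => f (-x)) A *ᵥ θ) := by
  rw [Fintype.sum_sum_type, hA.trace_mul_cfc, hA.dotProduct_cfc_mulVec, Finset.mul_sum,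
    Finset.mul_sum]
  congr 1 <;> refine Finset.sum_congr rfl fun i _ => ?_ <;> simp [eigenDiag] <;> ring

lemma drift_eq_expDerivSum (hA : A.IsHermitian) (S : Matrix ι ι ℝ) (θ : ι → ℝ) (γ σ2 t : ℝ) :
    -4 * γ * (θ ⬝ᵥ (A * NormedSpace.exp (t • A)) *ᵥ θ) +
        σ2 * (NormedSpace.exp ((-t) • A) * S * A).trace =
      expDerivSum (Sum.elim (σ2 • hA.eigenDiag S)
        ((4 * γ) • (star (hA.eigenvectorUnitary : Matrix ι ι ℝ) *ᵥ θ) ^ 2))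
        (Sum.elim hA.eigenvalues (-hA.eigenvalues)) (-t) := by
  have hθ : cfc (fun x => -x * Real.exp (-x * -t)) A = -(A * NormedSpace.exp (t • A)) := by
    rw [hA.mul_exp_smul, ← cfc_neg]
    congr 1; funext x; ring_nf
  have hS : (NormedSpace.exp ((-t) • A) * S * A).trace =
      (S * cfc (fun x => x * Real.exp (x * -t)) A).trace := by
    rw [trace_mul_cycle, trace_mul_comm, hA.mul_exp_smul]
    congr 3; funext x; ring_nf
  rw [expDerivSum,
    hA.sum_sumElim_mul_eq_trace_add_dotProduct S θ σ2 (4 * γ) fun x => x * Real.exp (x * -t),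
    hθ, hS, neg_mulVec, dotProduct_neg]
  ring

end IsHermitian

open scoped MatrixOrder in
lemma cfc_posPart_negPart_eq {A P N : Matrix ι ι ℝ} (hA : A = P + N) (hP : P.PosSemidef)
    (hN : (-N).PosSemidef) (hPN : P * N = 0) :
    cfc (fun x : ℝ => x⁺) A = P ∧ cfc (fun x : ℝ => x⁻) A = -N := by
  rw [← cfcₙ_eq_cfc, ← cfcₙ_eq_cfc, ← CFC.posPart_def, ← CFC.negPart_def]
  exact CFC.posPart_negPart_unique (by rw [hA, sub_neg_eq_add]) (by rw [mul_neg, hPN, neg_zero])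
    hP.nonneg hN.nonneg

end Matrix

theorem noise_equilibrium_exists_unique_general {n : ℕ}
    (A Ap An S0 : Matrix (Fin n) (Fin n) ℝ)
    (hsplit : A = Ap + An)
    (hAp : Ap.PosSemidef) (hAn : (-An).PosSemidef)
    (hApAn : Ap * An = 0)
    (hS0 : S0.PosSemidef)
    (θ : Fin n → ℝ) (γ σ2 : ℝ) (hγ : 0 ≤ γ) (hσ2 : 0 ≤ σ2)
    (G : ℝ → ℝ)
    (hG : ∀ l : ℝ, G l = -4 * γ * (θ ⬝ᵥ (A * NormedSpace.exp ((2 * l) • A)).mulVec θ)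
        + σ2 * (NormedSpace.exp ((-(2 * l)) • A) * S0 * A).trace)
    (hpos : 0 < σ2 * (S0 * Ap).trace - 4 * γ * (θ ⬝ᵥ An.mulVec θ))
    (hneg : 0 < -(σ2 * (S0 * An).trace) + 4 * γ * (θ ⬝ᵥ Ap.mulVec θ)) :
    StrictAnti G ∧ Tendsto G atBot atTop ∧ Tendsto G atTop atBot ∧ ∃! l : ℝ, G l = 0 := by
  have hA : A.IsHermitian := by simpa [hsplit] using hAp.isHermitian.sub hAn.isHermitian
  obtain ⟨hApos, hAneg⟩ := cfc_posPart_negPart_eq hsplit hAp hAn hApAn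
  set c := Sum.elim (σ2 • hA.eigenDiag S0)
    ((4 * γ) • (star (hA.eigenvectorUnitary : Matrix (Fin n) (Fin n) ℝ) *ᵥ θ) ^ 2)
  set κ := Sum.elim hA.eigenvalues (-hA.eigenvalues)
  have hc : 0 ≤ c := by
    rintro (i | i)
    · exact mul_nonneg hσ2 (hA.eigenDiag_nonneg hS0 i)
    · exact mul_nonneg (by positivity) (sq_nonneg _)
  have hpos' : 0 < ∑ j, c j * (κ j)⁺ := by
    rw [hA.sum_sumElim_mul_eq_trace_add_dotProduct S0 θ σ2 (4 * γ) fun x => x⁺]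
    simp only [posPart_neg, hApos, hAneg, neg_mulVec, dotProduct_neg]
    linarith
  have hneg' : 0 < ∑ j, c j * (κ j)⁻ := by
    rw [hA.sum_sumElim_mul_eq_trace_add_dotProduct S0 θ σ2 (4 * γ) fun x => x⁻]
    simp only [negPart_neg, hApos, hAneg, Matrix.mul_neg, trace_neg]
    linarith
  have hGF : G = fun l => expDerivSum c κ (-(2 * l)) :=
    funext fun l => by rw [hG, hA.drift_eq_expDerivSum]
  have hGanti : StrictAnti G := hGF ▸ (strictMono_expDerivSum hc hpos').comp_strictAnti
    fun a b hab => by linarith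
  have hGbot : Tendsto G atBot atTop := hGF ▸ (tendsto_expDerivSum_atTop hc hpos').comp
    (tendsto_neg_atBot_atTop.comp (tendsto_id.const_mul_atBot two_pos))
  have hGtop : Tendsto G atTop atBot := hGF ▸ (tendsto_expDerivSum_atBot hc hneg').comp
    (tendsto_neg_atTop_atBot.comp (tendsto_id.const_mul_atTop two_pos))
  have hGcont : Continuous G := hGF ▸ (continuous_expDerivSum c κ).comp (by fun_prop)
  obtain ⟨l, hl⟩ := hGcont.surjective' hGbot hGtop 0
  exact ⟨hGanti, hGbot, hGtop, l, hl, fun l' hl' => hGanti.injective (hl'.trans hl.symm)⟩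

/-- Existence and uniqueness of the noise equilibrium (parts (2)–(3) of the fixed point
theorem): with `A = A₊ + A₋` the spectral decomposition of a symmetric matrix into its
positive and negative parts, `S0 ⪰ 0`, `γ ≥ 0`, `σ² ≥ 0`, and the nondegeneracy conditions
`σ² Tr[S0A₊] − 4γ θᵀA₋θ > 0` and `−σ² Tr[S0A₋] + 4γ θᵀA₊θ > 0`, the drift
`G(λ) = −4γ θᵀ A exp(2λA) θ + σ² Tr[exp(−2λA) S0 A]` is strictly decreasing, tends to `+∞`
at `−∞` and to `−∞` at `+∞`, and has a unique zero `λ*`. -/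
theorem noise_equilibrium_exists_unique {n : ℕ}
    (A Ap An S0 : Matrix (Fin n) (Fin n) ℝ) (hA : A.IsSymm)
    (hsplit : A = Ap + An) (hApsymm : Ap.IsSymm) (hAnsymm : An.IsSymm)
    (hAp : Ap.PosSemidef) (hAn : (-An).PosSemidef)
    (hApAn : Ap * An = 0) (hAnAp : An * Ap = 0)
    (hS0 : S0.PosSemidef)
    (θ : Fin n → ℝ) (γ σ2 : ℝ) (hγ : 0 ≤ γ) (hσ2 : 0 ≤ σ2)
    (G : ℝ → ℝ)
    (hG : ∀ l : ℝ, G l = -4 * γ * (θ ⬝ᵥ (A * NormedSpace.exp ((2 * l) • A)).mulVec θ)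
        + σ2 * (NormedSpace.exp ((-(2 * l)) • A) * S0 * A).trace)
    (hpos : 0 < σ2 * (S0 * Ap).trace - 4 * γ * (θ ⬝ᵥ An.mulVec θ))
    (hneg : 0 < -(σ2 * (S0 * An).trace) + 4 * γ * (θ ⬝ᵥ Ap.mulVec θ)) :
    StrictAnti G ∧ Tendsto G atBot atTop ∧ Tendsto G atTop atBot ∧ ∃! l : ℝ, G l = 0 :=
  noise_equilibrium_exists_unique_general A Ap An S0 hsplit hAp hAn hApAn hS0 θ γ σ2 hγ hσ2 G hG
    hpos hneg
end

section
/- Differentiability of the equilibrium point (part (4) of the fixed point theorem): let A ∈ ℝ^{n×n} be symmetric, γ ≥ 0, σ² ≥ 0, and let Σ : ℝ^n → ℝ^{n×n} be a continuously differentiable map taking symmetric values. Define G(θ, λ) = −4γ θ^⊤ A exp(2λA) θ + σ² Tr[exp(−2λA) Σ(θ) A]. Suppose at some θ₀ ∈ ℝ^n and λ₀ ∈ ℝ we have G(θ₀, λ₀) = 0 and 4γ θ₀^⊤ A² exp(2λ₀A) θ₀ + σ² Tr[exp(−2λ₀A) Σ(θ₀) A²] > 0. Then there exist an open neighborhood V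 of θ₀ and a differentiable function λ* : V → ℝ with λ*(θ₀) = λ₀ and G(θ, λ*(θ)) = 0 for all θ ∈ V. -/
/-!
Apply the implicit function theorem to `(θ, λ) ↦ G(θ, λ)`. The map is `C¹` because the
entries of `exp(cλA)` are analytic in `λ` and `Σ` is `C¹`, and since `exp(cλA)` commutes
with `A`, `∂G/∂λ` is `-2` times the positive quantity of the hypothesis. The implicit
function is `C¹` at `θ₀`, hence differentiable on a neighbourhood of `θ₀`.
-/

open Matrix NormedSpace

theorem ContinuousLinearMap.isInvertible_of_apply_one_ne_zero {R : Type*} [Field R]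
    [TopologicalSpace R] [IsTopologicalRing R] {L : R →L[R] R} (h : L 1 ≠ 0) :
    L.IsInvertible :=
  ⟨ContinuousLinearEquiv.unitsEquivAut R (.mk0 _ h), ContinuousLinearMap.ext_ring (by simp)⟩

theorem exists_differentiableOn_implicitFunction_of_hasDerivAt {𝕜 E : Type*} [RCLike 𝕜]
    [NormedAddCommGroup E] [NormedSpace 𝕜 E] [CompleteSpace E] {f : E × 𝕜 → 𝕜}
    {u : E × 𝕜} (hf : ContDiffAt 𝕜 1 f u) {c : 𝕜} (hc : HasDerivAt (fun s => f (u.1, s)) c u.2)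
    (hc₀ : c ≠ 0) :
    ∃ V : Set E, IsOpen V ∧ u.1 ∈ V ∧ ∃ ψ : E → 𝕜, ψ u.1 = u.2 ∧
      (∀ x ∈ V, f (x, ψ x) = f u) ∧ DifferentiableOn 𝕜 ψ V := by
  have hpartial : (fderiv 𝕜 f u ∘L .inr 𝕜 E 𝕜) 1 = c :=
    ((hf.differentiableAt one_ne_zero).hasFDerivAt.comp_hasDerivAt u.2
      ((hasDerivAt_const u.2 u.1).prodMk (hasDerivAt_id u.2))).unique hc
  have hinv := ContinuousLinearMap.isInvertible_of_apply_one_ne_zero (hpartial ▸ hc₀)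
  obtain ⟨V, hV, hVo, hu⟩ := eventually_nhds_iff.1 <|
    (hf.eventually_apply_implicitFunction one_ne_zero hinv).and
      ((hf.contDiffAt_implicitFunction one_ne_zero hinv).eventually (by simp))
  exact ⟨V, hVo, hu, _, hf.implicitFunction_apply_self one_ne_zero hinv, fun x hx => (hV x hx).1,
    fun x hx => ((hV x hx).2.differentiableAt one_ne_zero).differentiableWithinAt⟩

namespace Matrix

variable {m 𝕂 : Type*} [Fintype m] [DecidableEq m] [RCLike 𝕂]

theorem contDiff_exp_smul_apply {E : Type*} [NormedAddCommGroup E] [NormedSpace 𝕂 E]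
    {g : E → 𝕂} {k : WithTop ℕ∞} (hg : ContDiff 𝕂 k g) (A : Matrix m m 𝕂) (i j : m) :
    ContDiff 𝕂 k fun x => exp (g x • A) i j := by
  -- `exp` does not depend on the norm, so any Banach algebra norm on matrices will do.
  open scoped Norms.Operator in
  have hexp : ContDiff 𝕂 k (exp : Matrix m m 𝕂 → Matrix m m 𝕂) :=
    contDiff_iff_contDiffAt.2 fun M => (analyticAt_exp_of_mem_ball M
      (by rw [expSeries_radius_eq_top]; exact edist_lt_top _ _)).contDiffAt
  open scoped Norms.Operator in
  exact (LinearMap.toContinuousLinearMap (entryLinearMap 𝕂 𝕂 i j)).contDiff.comp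
    (hexp.comp (hg.smul contDiff_const))

theorem hasDerivAt_linearMap_exp_mul_smul (L : Matrix m m 𝕂 →ₗ[𝕂] 𝕂)
    (A : Matrix m m 𝕂) (c t : 𝕂) :
    HasDerivAt (fun s => L (exp ((c * s) • A))) (c * L (exp ((c * t) • A) * A)) t := by
  open scoped Norms.Operator in
  have := (LinearMap.toContinuousLinearMap L).hasFDerivAt.comp_hasDerivAt _
    (hasDerivAt_exp_smul_const (𝕂 := 𝕂) A (c * t))
  exact (this.comp t ((hasDerivAt_id t).const_mul c)).congr_deriv (by rw [mul_one, mul_comm]; rfl)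

theorem hasDerivAt_dotProduct_mul_exp_mul_smul (A B : Matrix m m 𝕂) (v w : m → 𝕂)
    (c t : 𝕂) :
    HasDerivAt (fun s => v ⬝ᵥ (B * exp ((c * s) • A)) *ᵥ w)
      (c * (v ⬝ᵥ (B * A * exp ((c * t) • A)) *ᵥ w)) t := by
  let L : Matrix m m 𝕂 →ₗ[𝕂] 𝕂 :=
    { toFun M := v ⬝ᵥ (B * M) *ᵥ w
      map_add' M N := by simp [Matrix.mul_add, Matrix.add_mulVec]
      map_smul' r M := by simp [Matrix.smul_mulVec] }
  have hcomm : exp ((c * t) • A) * A = A * exp ((c * t) • A) :=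
    ((Commute.refl A).smul_left _).exp_left
  refine (hasDerivAt_linearMap_exp_mul_smul L A c t).congr_deriv ?_
  change c * v ⬝ᵥ (B * (exp ((c * t) • A) * A)) *ᵥ w = _
  rw [hcomm, Matrix.mul_assoc]

theorem hasDerivAt_trace_exp_mul_smul_mul (A S B : Matrix m m 𝕂) (c t : 𝕂) :
    HasDerivAt (fun s => (exp ((c * s) • A) * S * B).trace)
      (c * (exp ((c * t) • A) * S * (B * A)).trace) t := by
  have hcomm : exp ((c * t) • A) * A = A * exp ((c * t) • A) :=
    ((Commute.refl A).smul_left _).exp_left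
  convert hasDerivAt_linearMap_exp_mul_smul
    (traceLinearMap m 𝕂 𝕂 ∘ₗ LinearMap.mulRight 𝕂 (S * B)) A c t using 1
  · simp [Matrix.mul_assoc]
  · simp only [LinearMap.comp_apply, LinearMap.mulRight_apply, traceLinearMap_apply]
    rw [hcomm, ← Matrix.mul_assoc _ B A, trace_mul_comm _ A]
    simp only [Matrix.mul_assoc]

end Matrix

section EquilibriumResidual

variable {m : Type*} [Fintype m] [DecidableEq m]

/-- The paper's `G(θ, λ)`, with `Sig` for `Σ`. -/
noncomputable def equilibriumResidual (A : Matrix m m ℝ) (γ σ2 : ℝ)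
    (Sig : (m → ℝ) → Matrix m m ℝ) (θ : m → ℝ) (l : ℝ) : ℝ :=
  -4 * γ * (θ ⬝ᵥ (A * exp ((2 * l) • A)) *ᵥ θ)
    + σ2 * (exp ((-(2 * l)) • A) * Sig θ * A).trace

theorem contDiff_equilibriumResidual (A : Matrix m m ℝ) (γ σ2 : ℝ)
    {Sig : (m → ℝ) → Matrix m m ℝ} {k : WithTop ℕ∞}
    (hSig : ∀ i j, ContDiff ℝ k fun θ => Sig θ i j) :
    ContDiff ℝ k fun p : (m → ℝ) × ℝ => equilibriumResidual A γ σ2 Sig p.1 p.2 := by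
  have hexp₁ := fun i j => contDiff_exp_smul_apply (k := k)
    (g := fun p : (m → ℝ) × ℝ => 2 * p.2) (by fun_prop) A i j
  have hexp₂ := fun i j => contDiff_exp_smul_apply (k := k)
    (g := fun p : (m → ℝ) × ℝ => -(2 * p.2)) (by fun_prop) A i j
  have hSig' := fun i j => (hSig i j).comp (contDiff_fst (E := m → ℝ) (F := ℝ))
  simp only [Function.comp_def] at hSig'
  simp only [equilibriumResidual, dotProduct, mulVec, mul_apply, trace, diag]
  fun_prop

theorem hasDerivAt_equilibriumResidual (A : Matrix m m ℝ) (γ σ2 : ℝ)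
    (Sig : (m → ℝ) → Matrix m m ℝ) (θ : m → ℝ) (l : ℝ) :
    HasDerivAt (equilibriumResidual A γ σ2 Sig θ)
      (-2 * (4 * γ * (θ ⬝ᵥ (A * A * exp ((2 * l) • A)) *ᵥ θ)
        + σ2 * (exp ((-(2 * l)) • A) * Sig θ * (A * A)).trace)) l := by
  have htrace := hasDerivAt_trace_exp_mul_smul_mul A (Sig θ) A (-2) l
  simp only [neg_mul] at htrace
  exact (((hasDerivAt_dotProduct_mul_exp_mul_smul A A θ θ 2 l).const_mul (-4 * γ)).add
    (htrace.const_mul σ2)).congr_deriv (by ring)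

end EquilibriumResidual

theorem equilibrium_point_differentiable_general {n : ℕ}
    (A : Matrix (Fin n) (Fin n) ℝ)
    (γ σ2 : ℝ)
    (Sig : (Fin n → ℝ) → Matrix (Fin n) (Fin n) ℝ)
    (hSigC1 : ∀ i j : Fin n, ContDiff ℝ 1 fun θ => Sig θ i j)
    (G : (Fin n → ℝ) → ℝ → ℝ)
    (hG : ∀ (θ : Fin n → ℝ) (l : ℝ),
      G θ l = -4 * γ * (θ ⬝ᵥ (A * NormedSpace.exp ((2 * l) • A)).mulVec θ)
        + σ2 * (NormedSpace.exp ((-(2 * l)) • A) * Sig θ * A).trace)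
    (θ₀ : Fin n → ℝ) (l₀ : ℝ) (hzero : G θ₀ l₀ = 0)
    (hnondeg : 0 < 4 * γ * (θ₀ ⬝ᵥ (A * A * NormedSpace.exp ((2 * l₀) • A)).mulVec θ₀)
        + σ2 * (NormedSpace.exp ((-(2 * l₀)) • A) * Sig θ₀ * (A * A)).trace) :
    ∃ V : Set (Fin n → ℝ), IsOpen V ∧ θ₀ ∈ V ∧
      ∃ lam : (Fin n → ℝ) → ℝ, lam θ₀ = l₀ ∧ (∀ θ ∈ V, G θ (lam θ) = 0) ∧
        DifferentiableOn ℝ lam V := by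
  obtain rfl : G = equilibriumResidual A γ σ2 Sig := funext₂ hG
  obtain ⟨V, hV, hθ₀, lam, hlam₀, hlam, hdiff⟩ :=
    exists_differentiableOn_implicitFunction_of_hasDerivAt (u := (θ₀, l₀))
      (contDiff_equilibriumResidual A γ σ2 hSigC1).contDiffAt
      (hasDerivAt_equilibriumResidual A γ σ2 Sig θ₀ l₀) (by linarith)
  exact ⟨V, hV, hθ₀, lam, hlam₀, fun θ hθ => (hlam θ hθ).trans hzero, hdiff⟩

/-- Differentiability of the equilibrium point (part (4) of the fixed point theorem): if the
gradient covariance `Σ` is continuously differentiable (entrywise) and takes symmetric values,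
`G(θ,λ) = −4γ θᵀAexp(2λA)θ + σ² Tr[exp(−2λA)Σ(θ)A]` vanishes at `(θ₀, λ₀)`, and
`4γ θ₀ᵀA²exp(2λ₀A)θ₀ + σ² Tr[exp(−2λ₀A)Σ(θ₀)A²] > 0` (so that `∂G/∂λ ≠ 0`), then there is a
differentiable local solution `λ*(θ)` of `G(θ, λ*(θ)) = 0` around `θ₀` with `λ*(θ₀) = λ₀`. -/
theorem equilibrium_point_differentiable {n : ℕ}
    (A : Matrix (Fin n) (Fin n) ℝ) (hA : A.IsSymm)
    (γ σ2 : ℝ) (hγ : 0 ≤ γ) (hσ2 : 0 ≤ σ2)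
    (Sig : (Fin n → ℝ) → Matrix (Fin n) (Fin n) ℝ)
    (hSigC1 : ∀ i j : Fin n, ContDiff ℝ 1 fun θ => Sig θ i j)
    (hSigSymm : ∀ θ, (Sig θ).IsSymm)
    (G : (Fin n → ℝ) → ℝ → ℝ)
    (hG : ∀ (θ : Fin n → ℝ) (l : ℝ),
      G θ l = -4 * γ * (θ ⬝ᵥ (A * NormedSpace.exp ((2 * l) • A)).mulVec θ)
        + σ2 * (NormedSpace.exp ((-(2 * l)) • A) * Sig θ * A).trace)
    (θ₀ : Fin n → ℝ) (l₀ : ℝ) (hzero : G θ₀ l₀ = 0)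
    (hnondeg : 0 < 4 * γ * (θ₀ ⬝ᵥ (A * A * NormedSpace.exp ((2 * l₀) • A)).mulVec θ₀)
        + σ2 * (NormedSpace.exp ((-(2 * l₀)) • A) * Sig θ₀ * (A * A)).trace) :
    ∃ V : Set (Fin n → ℝ), IsOpen V ∧ θ₀ ∈ V ∧
      ∃ lam : (Fin n → ℝ) → ℝ, lam θ₀ = l₀ ∧ (∀ θ ∈ V, G θ (lam θ) = 0) ∧
        DifferentiableOn ℝ lam V :=
  equilibrium_point_differentiable_general A γ σ2 Sig hSigC1 G hG θ₀ l₀ hzero hnondeg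
end

section
/- Lower bound on the Noether-charge drift away from equilibrium: let A ∈ ℝ^{n×n} be symmetric with positive part A₊ and negative part A₋ (so A = A₊ + A₋, A₊ ⪰ 0, −A₋ ⪰ 0, A₊A₋ = 0), and let Σ* ∈ ℝ^{n×n} be positive semidefinite with Tr[Σ* A] = 0. Then for every λ > 0: Tr[Σ* exp(2λA) A] ≥ 2λ Tr[Σ* A₊²]; and for every λ < 0: Tr[Σ* exp(2λA) A] ≤ 2λ Tr[Σ* A₋²]. -/
/-!
By uniqueness of the positive/negative decomposition, `A₊ = A⁺` and `A₋ = -A⁻` are functions of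
`A` in the continuous functional calculus, as is `exp(LA) A = f(A)` with `f x = e^{Lx} x`.
For `L ≥ 0` the scalar inequality `x + L (x⁺)² ≤ e^{Lx} x` lifts to the Loewner order
`A + L A₊² ≤ exp(LA) A`, and for `L ≤ 0` the mirror inequality gives `exp(LA) A ≤ A + L A₋²`.
Pairing with `Σ* ⪰ 0` is monotone for the Loewner order, and `Tr[Σ* A] = 0` removes the term `A`.
-/

open Matrix

lemma Real.add_mul_posPart_mul_posPart_le_exp_mul_mul {L : ℝ} (hL : 0 ≤ L) (x : ℝ) :
    x + L * (x⁺ * x⁺) ≤ Real.exp (L * x) * x := by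
  rcases le_total 0 x with hx | hx
  · rw [posPart_eq_self.mpr hx]
    nlinarith [Real.add_one_le_exp (L * x)]
  · rw [posPart_eq_zero.mpr hx]
    nlinarith [Real.exp_le_one_iff.mpr (mul_nonpos_of_nonneg_of_nonpos hL hx)]

section ContinuousFunctionalCalculus

variable {A : Type*} [NormedRing A] [StarRing A] [NormedAlgebra ℝ A]
  [ContinuousFunctionalCalculus ℝ A IsSelfAdjoint]

lemma add_smul_posPart_mul_posPart_eq_cfc {a : A} (ha : IsSelfAdjoint a) (L : ℝ) :
    a + L • (a⁺ * a⁺) = cfc (fun x => x + L * (x⁺ * x⁺)) a := by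
  rw [cfc_add .., cfc_const_mul .., cfc_mul .., cfc_id' ℝ a, CFC.posPart_def, cfcₙ_eq_cfc]

variable [StarModule ℝ A]

lemma exp_smul_mul_eq_cfc {a : A} (ha : IsSelfAdjoint a) (L : ℝ) :
    NormedSpace.exp (L • a) * a = cfc (fun x => Real.exp (L * x) * x) a := by
  rw [← CFC.real_exp_eq_normedSpace_exp (.smul (.all L) ha), ← cfc_comp_smul L Real.exp a,
    cfc_mul _ _ a, cfc_id' ℝ a]
  rfl

variable [PartialOrder A] [StarOrderedRing A]

lemma add_smul_posPart_mul_posPart_le_exp_smul_mul {a : A} (ha : IsSelfAdjoint a) {L : ℝ}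
    (hL : 0 ≤ L) : a + L • (a⁺ * a⁺) ≤ NormedSpace.exp (L • a) * a := by
  rw [exp_smul_mul_eq_cfc ha, add_smul_posPart_mul_posPart_eq_cfc ha]
  exact cfc_mono fun x _ => Real.add_mul_posPart_mul_posPart_le_exp_mul_mul hL x

lemma exp_smul_mul_le_add_smul_negPart_mul_negPart {a : A} (ha : IsSelfAdjoint a) {L : ℝ}
    (hL : L ≤ 0) : NormedSpace.exp (L • a) * a ≤ a + L • (a⁻ * a⁻) := by
  have h := add_smul_posPart_mul_posPart_le_exp_smul_mul ha.neg (neg_nonneg.mpr hL)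
  rwa [CFC.posPart_neg, neg_smul_neg, mul_neg, ← neg_le_neg_iff, neg_neg, neg_add, neg_neg,
    ← neg_smul, neg_neg] at h

end ContinuousFunctionalCalculus

namespace Matrix

open scoped MatrixOrder ComplexOrder

variable {n 𝕜 : Type*} [Fintype n] [DecidableEq n] [RCLike 𝕜]

lemma trace_mul_nonneg {S M : Matrix n n 𝕜} (hS : 0 ≤ S) (hM : 0 ≤ M) : 0 ≤ (S * M).trace := by
  obtain ⟨R, hRsa, hRR⟩ : ∃ R : Matrix n n 𝕜, IsSelfAdjoint R ∧ R * R = S :=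
    ⟨CFC.sqrt S, (CFC.sqrt_nonneg S).isSelfAdjoint, CFC.sqrt_mul_sqrt_self S hS⟩
  have hconj : 0 ≤ R * M * R := by simpa only [hRsa.star_eq] using star_left_conjugate_nonneg hM R
  rw [← hRR, Matrix.mul_assoc, trace_mul_comm]
  exact (nonneg_iff_posSemidef.mp hconj).trace_nonneg

lemma trace_mul_le_trace_mul {S M N : Matrix n n 𝕜} (hS : 0 ≤ S) (hMN : M ≤ N) :
    (S * M).trace ≤ (S * N).trace := by
  rw [← sub_nonneg, ← trace_sub, ← Matrix.mul_sub]
  exact trace_mul_nonneg hS (sub_nonneg.mpr hMN)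

end Matrix

open scoped MatrixOrder Matrix.Norms.L2Operator in
theorem drift_bound_away_from_equilibrium_general {n : ℕ}
    (A Ap An Sstar : Matrix (Fin n) (Fin n) ℝ) (hA : A.IsSymm)
    (hsplit : A = Ap + An)
    (hAp : Ap.PosSemidef) (hAn : (-An).PosSemidef)
    (hApAn : Ap * An = 0)
    (hS : Sstar.PosSemidef) (heq : (Sstar * A).trace = 0) :
    (∀ l : ℝ, 0 < l →
        2 * l * (Sstar * (Ap * Ap)).trace ≤ (Sstar * NormedSpace.exp ((2 * l) • A) * A).trace)
      ∧ (∀ l : ℝ, l < 0 →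
        (Sstar * NormedSpace.exp ((2 * l) • A) * A).trace ≤ 2 * l * (Sstar * (An * An)).trace) := by
  obtain ⟨hApos, hAneg⟩ : A⁺ = Ap ∧ A⁻ = -An :=
    CFC.posPart_negPart_unique (by rw [hsplit, sub_neg_eq_add]) (by rw [mul_neg, hApAn, neg_zero])
      hAp.nonneg hAn.nonneg
  have hAsa : IsSelfAdjoint A := (conjTranspose_eq_transpose_of_trivial A).trans hA
  have trace_eq (L : ℝ) (B : Matrix (Fin n) (Fin n) ℝ) :
      (Sstar * (A + L • B)).trace = L * (Sstar * B).trace := by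
    rw [Matrix.mul_add, trace_add, heq, Matrix.mul_smul, trace_smul, smul_eq_mul, zero_add]
  refine ⟨fun l hl => ?_, fun l hl => ?_⟩
  · rw [← trace_eq, ← hApos, Matrix.mul_assoc]
    exact trace_mul_le_trace_mul hS.nonneg
      (add_smul_posPart_mul_posPart_le_exp_smul_mul hAsa (by positivity))
  · rw [← neg_mul_neg An, ← hAneg, ← trace_eq, Matrix.mul_assoc]
    exact trace_mul_le_trace_mul hS.nonneg
      (exp_smul_mul_le_add_smul_negPart_mul_negPart hAsa (by linarith))

/-- Lower bound on the Noether-charge drift away from equilibrium: if `A = A₊ + A₋` is the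
decomposition of a symmetric matrix into positive and negative parts, `Σ* ⪰ 0` and
`Tr[Σ*A] = 0` (the noise-equilibrium condition), then for `λ > 0`,
`Tr[Σ* exp(2λA) A] ≥ 2λ Tr[Σ* A₊²]`, and for `λ < 0`, `Tr[Σ* exp(2λA) A] ≤ 2λ Tr[Σ* A₋²]`. -/
theorem drift_bound_away_from_equilibrium {n : ℕ}
    (A Ap An Sstar : Matrix (Fin n) (Fin n) ℝ) (hA : A.IsSymm)
    (hsplit : A = Ap + An) (hApsymm : Ap.IsSymm) (hAnsymm : An.IsSymm)
    (hAp : Ap.PosSemidef) (hAn : (-An).PosSemidef)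
    (hApAn : Ap * An = 0) (hAnAp : An * Ap = 0)
    (hS : Sstar.PosSemidef) (heq : (Sstar * A).trace = 0) :
    (∀ l : ℝ, 0 < l →
        2 * l * (Sstar * (Ap * Ap)).trace ≤ (Sstar * NormedSpace.exp ((2 * l) • A) * A).trace)
      ∧ (∀ l : ℝ, l < 0 →
        (Sstar * NormedSpace.exp ((2 * l) • A) * A).trace ≤ 2 * l * (Sstar * (An * An)).trace) :=
  drift_bound_away_from_equilibrium_general A Ap An Sstar hA hsplit hAp hAn hApAn hS heq
end

section
/- Existence of a balanced factorization: let Σ_u ∈ ℝ^{d_y×d_y} and Σ_w ∈ ℝ^{d_x×d_x} be symmetric positive definite matrices, let V ∈ ℝ^{d_y×d_x}, and let d ≥ rank(V). Then there exist matrices U ∈ ℝ^{d_y×d} and W ∈ ℝ^{d×d_x} such that U W = V and W Σ_w W^⊤ = U^⊤ Σ_u U. -/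
/-!
Write `Σ_u = R_uᵀ R_u` and `Σ_w = R_wᵀ R_w` with `R_u`, `R_w` invertible. Then `(U, W)` is
balanced for `(Σ_u, Σ_w)` exactly when `(R_u U, W R_wᵀ)` is balanced for identity covariances,
and it factors `V` exactly when that pair factors `B = R_u V R_wᵀ`, which has the rank of `V`.

For identity covariances, diagonalize `Bᵀ B = Q Λ Qᵀ`. The columns of `C = B Q` are orthogonal
with `Cᵀ C = Λ`, so `U₀ = C Λ^{-1/4}`, `W₀ = Λ^{1/4} Qᵀ` is balanced, both Gram matrices being
`Λ^{1/2}`. Only `rank B` columns of `U₀` are nonzero; dropping the others and embedding the rest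
into `d` coordinates keeps the product and the balance.
-/

open Matrix

namespace Matrix

variable {m n κ ι R : Type*}

def IsBalanced [Fintype m] [Fintype n] [CommSemiring R] (U : Matrix m κ R) (W : Matrix κ n R) :
    Prop :=
  W * Wᵀ = Uᵀ * U

theorem isBalanced_mul_mul_transpose_iff [Fintype m] [Fintype n] [CommSemiring R]
    {U : Matrix m κ R} {W : Matrix κ n R} (A : Matrix m m R) (C : Matrix n n R) :
    IsBalanced (A * U) (W * Cᵀ) ↔ W * (Cᵀ * C) * Wᵀ = Uᵀ * (Aᵀ * A) * U := by
  simp only [IsBalanced, transpose_mul, transpose_transpose, Matrix.mul_assoc]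

namespace IsBalanced

variable [Fintype m] [Fintype n] [CommSemiring R] {U : Matrix m κ R} {W : Matrix κ n R}

theorem mul_transpose [Fintype κ] (h : IsBalanced U W) (P : Matrix κ ι R) :
    IsBalanced (U * P) (Pᵀ * W) := by
  rw [IsBalanced] at h ⊢
  rw [transpose_mul, transpose_mul, transpose_transpose, Matrix.mul_assoc,
    ← Matrix.mul_assoc W, h, Matrix.mul_assoc, Matrix.mul_assoc]

theorem submatrix (h : IsBalanced U W) (e : ι → κ) :
    IsBalanced (U.submatrix id e) (W.submatrix e id) := by
  rw [IsBalanced] at h ⊢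
  rw [transpose_submatrix, transpose_submatrix, ← submatrix_mul _ _ _ _ _ Function.bijective_id,
    ← submatrix_mul _ _ _ _ _ Function.bijective_id, h]

theorem mul_of_mul_transpose_eq_one [DecidableEq n] {Q : Matrix n n R}
    (h : IsBalanced U W) (hQ : Q * Qᵀ = 1) : IsBalanced U (W * Q) := by
  rw [IsBalanced] at h ⊢
  rw [transpose_mul, Matrix.mul_assoc, ← Matrix.mul_assoc Q, hQ, Matrix.one_mul, h]

end IsBalanced

theorem submatrix_val_mul_submatrix_val [Fintype κ] [NonUnitalNonAssocSemiring R]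
    (U : Matrix m κ R) (W : Matrix κ n R) (S : Finset κ) (hS : ∀ i ∉ S, ∀ x, U x i = 0) :
    (U.submatrix id Subtype.val : Matrix m S R) * (W.submatrix Subtype.val id : Matrix S n R) =
      U * W := by
  ext x y
  simp only [mul_apply, submatrix_apply, id_eq]
  rw [Finset.sum_coe_sort S (fun i => U x i * W i y)]
  exact Finset.sum_subset (Finset.subset_univ S) fun i _ hi => by rw [hS i hi x, zero_mul]

theorem one_submatrix_mul_transpose_one_submatrix [Fintype ι] [DecidableEq ι] [DecidableEq κ]
    [CommSemiring R] {e : κ → ι} (he : Function.Injective e) :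
    (1 : Matrix ι ι R).submatrix e id * ((1 : Matrix ι ι R).submatrix e id)ᵀ = 1 := by
  rw [transpose_submatrix, transpose_one, ← submatrix_mul _ _ _ _ _ Function.bijective_id,
    Matrix.mul_one, submatrix_one e he]

theorem exists_isBalanced_of_card_le [Fintype m] [Fintype n] [Fintype κ] [Fintype ι]
    [DecidableEq ι] [CommSemiring R] {U₀ : Matrix m κ R} {W₀ : Matrix κ n R}
    (h : IsBalanced U₀ W₀) (S : Finset κ) (hS : ∀ i ∉ S, ∀ x, U₀ x i = 0)
    (hcard : S.card ≤ Fintype.card ι) :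
    ∃ (U : Matrix m ι R) (W : Matrix ι n R), U * W = U₀ * W₀ ∧ IsBalanced U W := by
  classical
  obtain ⟨e⟩ : Nonempty (S ↪ ι) := Function.Embedding.nonempty_of_card_le (by simpa using hcard)
  let E : Matrix S ι R := (1 : Matrix ι ι R).submatrix e id
  let U₁ : Matrix m S R := U₀.submatrix id Subtype.val
  let W₁ : Matrix S n R := W₀.submatrix Subtype.val id
  refine ⟨U₁ * E, Eᵀ * W₁, ?_, (h.submatrix _).mul_transpose E⟩
  rw [Matrix.mul_assoc, ← Matrix.mul_assoc E, one_submatrix_mul_transpose_one_submatrix e.injective,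
    Matrix.one_mul, submatrix_val_mul_submatrix_val U₀ W₀ S hS]

section Field

variable {K : Type*} [Field K] [Fintype m] [Fintype n] [DecidableEq n] {C : Matrix m n K}
  {f : n → K}

theorem isBalanced_mul_diagonal_inv (hC : Cᵀ * C = diagonal (f ^ 4)) :
    IsBalanced (C * diagonal f⁻¹) (diagonal f) := by
  rw [IsBalanced, transpose_mul, diagonal_transpose, diagonal_transpose, Matrix.mul_assoc,
    ← Matrix.mul_assoc Cᵀ, hC, diagonal_mul_diagonal, diagonal_mul_diagonal, diagonal_mul_diagonal]
  congr 1
  ext i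
  simp only [Pi.inv_apply, Pi.pow_apply]
  rcases eq_or_ne (f i) 0 with hf | hf
  · simp [hf]
  · field_simp

end Field

section LinearOrderedField

variable {K : Type*} [Field K] [LinearOrder K] [IsStrictOrderedRing K] [Fintype m]

theorem transpose_mul_self_apply_self_eq_zero_iff {A : Matrix m n K} {i : n} :
    (Aᵀ * A) i i = 0 ↔ ∀ x, A x i = 0 := by
  change (fun x => A x i) ⬝ᵥ (fun x => A x i) = 0 ↔ _
  rw [dotProduct_self_eq_zero, funext_iff]
  rfl

theorem mul_diagonal_inv_mul_diagonal [Fintype n] [DecidableEq n] {C : Matrix m n K} {f : n → K}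
    (hC : Cᵀ * C = diagonal (f ^ 4)) : C * diagonal f⁻¹ * diagonal f = C := by
  ext x i
  rw [Matrix.mul_assoc, diagonal_mul_diagonal, mul_diagonal]
  by_cases hf : f i = 0
  · have := (transpose_mul_self_apply_self_eq_zero_iff (A := C) (i := i)).mp (by simp [hC, hf])
    simp [this x]
  · simp [hf]

end LinearOrderedField

theorem transpose_mul_self_mul_eigenvectorUnitary [Fintype m] [Fintype n] [DecidableEq n]
    (B : Matrix m n ℝ) (hB : (Bᵀ * B).IsHermitian) :
    (B * (hB.eigenvectorUnitary : Matrix n n ℝ))ᵀ * (B * (hB.eigenvectorUnitary : Matrix n n ℝ)) =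
      diagonal hB.eigenvalues := by
  have := hB.conjStarAlgAut_star_eigenvectorUnitary
  rw [Unitary.conjStarAlgAut_star_apply, star_eq_conjTranspose,
    conjTranspose_eq_transpose_of_trivial] at this
  simpa [transpose_mul, Matrix.mul_assoc] using this

theorem exists_isBalanced_of_rank_le [Fintype m] [Fintype n] [Fintype ι] [DecidableEq ι]
    (B : Matrix m n ℝ) (hd : B.rank ≤ Fintype.card ι) :
    ∃ (U : Matrix m ι ℝ) (W : Matrix ι n ℝ), U * W = B ∧ IsBalanced U W := by
  classical
  have hM : (Bᵀ * B).PosSemidef := by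
    simpa [conjTranspose_eq_transpose_of_trivial] using posSemidef_conjTranspose_mul_self B
  have hB := hM.isHermitian
  set Q : Matrix n n ℝ := (hB.eigenvectorUnitary : Matrix n n ℝ)
  have hQ : Q * Qᵀ = 1 := by
    simpa [star_eq_conjTranspose, conjTranspose_eq_transpose_of_trivial] using
      mem_unitaryGroup_iff.mp hB.eigenvectorUnitary.2
  have hQ' : Qᵀ * Q = 1 := by
    simpa [star_eq_conjTranspose, conjTranspose_eq_transpose_of_trivial] using
      mem_unitaryGroup_iff'.mp hB.eigenvectorUnitary.2
  set lam := hB.eigenvalues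
  set f : n → ℝ := fun i => √√(lam i)
  have hC : (B * Q)ᵀ * (B * Q) = diagonal (f ^ 4) := by
    rw [transpose_mul_self_mul_eigenvectorUnitary]
    congr 1
    ext i
    have := hM.eigenvalues_nonneg i
    simp only [f, Pi.pow_apply]
    rw [show 4 = 2 * 2 from rfl, pow_mul, Real.sq_sqrt (Real.sqrt_nonneg _), Real.sq_sqrt this]
  set S := Finset.univ.filter fun i => lam i ≠ 0
  have hS : ∀ i ∉ S, ∀ x, (B * Q * diagonal f⁻¹) x i = 0 := by
    intro i hi x
    simp only [S, Finset.mem_filter, Finset.mem_univ, true_and, not_not] at hi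
    simp [f, hi]
  have hcard : S.card ≤ Fintype.card ι := by
    rw [← Fintype.card_subtype, ← hB.rank_eq_card_non_zero_eigs, rank_transpose_mul_self]
    exact hd
  obtain ⟨U, W, hUW, hbal⟩ := exists_isBalanced_of_card_le
    ((isBalanced_mul_diagonal_inv hC).mul_of_mul_transpose_eq_one (Q := Qᵀ)
      (by rwa [transpose_transpose])) S hS hcard
  refine ⟨U, W, ?_, hbal⟩
  rw [hUW, ← Matrix.mul_assoc, mul_diagonal_inv_mul_diagonal hC, Matrix.mul_assoc, hQ,
    Matrix.mul_one]

theorem PosDef.exists_isUnit_eq_transpose_mul [Fintype n] [DecidableEq n] {S : Matrix n n ℝ}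
    (hS : S.PosDef) : ∃ R : Matrix n n ℝ, IsUnit R ∧ S = Rᵀ * R := by
  open scoped MatrixOrder in
  obtain ⟨R, hR, rfl⟩ :=
    CStarAlgebra.isStrictlyPositive_iff_eq_star_mul_self.mp hS.isStrictlyPositive
  exact ⟨R, hR, by rw [star_eq_conjTranspose, conjTranspose_eq_transpose_of_trivial]⟩

end Matrix

/-- Existence of a balanced factorization: for positive definite `Σ_u`, `Σ_w`, any matrix `V`
and any inner dimension `d ≥ rank(V)`, there is a factorization `V = UW` satisfying the
balance condition `W Σ_w Wᵀ = Uᵀ Σ_u U`. -/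
theorem exists_balanced_factorization {dx dy d : ℕ}
    (Su : Matrix (Fin dy) (Fin dy) ℝ) (hSu : Su.PosDef)
    (Sw : Matrix (Fin dx) (Fin dx) ℝ) (hSw : Sw.PosDef)
    (V : Matrix (Fin dy) (Fin dx) ℝ) (hd : V.rank ≤ d) :
    ∃ (U : Matrix (Fin dy) (Fin d) ℝ) (W : Matrix (Fin d) (Fin dx) ℝ),
      U * W = V ∧ W * Sw * Wᵀ = Uᵀ * Su * U := by
  obtain ⟨Ru, hRu, rfl⟩ := hSu.exists_isUnit_eq_transpose_mul
  obtain ⟨Rw, hRw, rfl⟩ := hSw.exists_isUnit_eq_transpose_mul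
  rw [isUnit_iff_isUnit_det] at hRu hRw
  rw [← det_transpose] at hRw
  obtain ⟨U, W, hUW, hbal⟩ := exists_isBalanced_of_rank_le (ι := Fin d) (Ru * V * Rwᵀ)
    (by simpa using (rank_mul_le_left _ _).trans ((rank_mul_le_right _ _).trans hd))
  refine ⟨Ru⁻¹ * U, W * Rwᵀ⁻¹, ?_, ?_⟩
  · rw [Matrix.mul_assoc, ← Matrix.mul_assoc U, hUW, mul_nonsing_inv_cancel_right _ _ hRw,
      nonsing_inv_mul_cancel_left _ _ hRu]
  · rw [← isBalanced_mul_mul_transpose_iff, mul_nonsing_inv_cancel_left _ _ hRu,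
      nonsing_inv_mul_cancel_right _ _ hRw]
    exact hbal
end

section
/- Hessian trace of the two-layer linear network loss (Proposition 5.2): let Z be a finite dataset of pairs (x_z, y_z) ∈ ℝ^{d_x} × ℝ^{d_y}, let L(U, W) = E[‖U W x − y‖²] for U ∈ ℝ^{d_y×d}, W ∈ ℝ^{d×d_x}, viewed as a function of the d_y·d + d·d_x parameters (U, W), and let Σ_x = E[x x^⊤]. Then the trace of the Hessian of L with respect to all parameters equals 2 ( d_y Tr[W Σ_x W^⊤] + ‖U‖_F² Tr[Σ_x] ). -/
open Matrix

/-!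
Every residual `r_{z,i}(U, W) = (U W x_z)_i - y_{z,i}` is bilinear in `(U, W)`, and no monomial
of it contains a single parameter twice, so its second derivative along any coordinate axis
vanishes. Hence the Gauss–Newton formula is exact on the diagonal of the Hessian:
`∂²_p L = 2 E[∑_i (∂_p r_{z,i})²]`. For `p = U_{ia}` this is `2 E[(W x)_a²]`, independent of `i`;
for `p = W_{aj}` it is `2 E[∑_i U_{ia}² x_j²]`. Summing over `p` gives `2 d_y Tr[W Σ_x Wᵀ]` and
`2 ‖U‖_F² Tr[Σ_x]`.
-/

section GaussNewton

variable {E ι : Type*} [NormedAddCommGroup E] [NormedSpace ℝ E] [Fintype ι]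

theorem fderiv_fderiv_apply_const_mul_sum_sq (c : ℝ) (r : ι → E → ℝ) (θ e : E)
    (hr : ∀ k, Differentiable ℝ (r k))
    (hDr : ∀ k, DifferentiableAt ℝ (fun v => fderiv ℝ (r k) v e) θ) :
    fderiv ℝ (fun v => fderiv ℝ (fun w => c * ∑ k, r k w ^ 2) v e) θ e
      = c * ∑ k, 2 * (fderiv ℝ (r k) θ e ^ 2
          + r k θ * fderiv ℝ (fun v => fderiv ℝ (r k) v e) θ e) := by
  have hfirst : (fun v => fderiv ℝ (fun w => c * ∑ k, r k w ^ 2) v e)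
      = fun v => c * ∑ k, 2 * (r k v * fderiv ℝ (r k) v e) := by
    funext v
    rw [fderiv_const_mul (by fun_prop), fderiv_fun_sum fun k _ => by fun_prop]
    simp only [_root_.smul_apply, _root_.sum_apply, smul_eq_mul, fderiv_fun_pow 2 (hr _ v)]
    simp [mul_assoc]
  rw [hfirst, fderiv_const_mul (by fun_prop), fderiv_fun_sum fun k _ => by fun_prop]
  simp only [_root_.smul_apply, _root_.sum_apply, smul_eq_mul]
  congr 1
  refine Finset.sum_congr rfl fun k _ => ?_
  rw [fderiv_const_mul ((hr k θ).fun_mul (hDr k)), fderiv_fun_mul (hr k θ) (hDr k)]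
  simp only [_root_.smul_apply, _root_.add_apply, smul_eq_mul]
  ring

end GaussNewton

section TwoLayerResidual

variable {m h n : Type*} [Fintype m] [Fintype h] [Fintype n]

def twoLayerResidual (x : n → ℝ) (y : ℝ) (i : m) (θ : (m × h) ⊕ (h × n) → ℝ) : ℝ :=
  (∑ a, θ (.inl (i, a)) * ∑ j, θ (.inr (a, j)) * x j) - y

variable (x : n → ℝ) (y : ℝ) (i : m)

theorem differentiable_twoLayerResidual :
    Differentiable ℝ (twoLayerResidual (h := h) x y i) := by
  unfold twoLayerResidual
  fun_prop

theorem fderiv_twoLayerResidual_apply (v e : (m × h) ⊕ (h × n) → ℝ) :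
    fderiv ℝ (twoLayerResidual x y i) v e
      = ∑ a, (e (.inl (i, a)) * ∑ j, v (.inr (a, j)) * x j
          + v (.inl (i, a)) * ∑ j, e (.inr (a, j)) * x j) := by
  unfold twoLayerResidual
  simp (disch := fun_prop) only [fderiv_sub_const, fderiv_fun_sum, fderiv_fun_mul, fderiv_apply,
    fderiv_fun_id, fderiv_fun_const, _root_.sum_apply, _root_.add_apply, _root_.smul_apply,
    ContinuousLinearMap.comp_id, ContinuousLinearMap.comp_zero, ContinuousLinearMap.proj_apply,
    Pi.zero_apply, _root_.zero_apply, smul_eq_mul, mul_zero, zero_add]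
  refine Finset.sum_congr rfl fun a _ => ?_
  simp only [mul_comm (x _)]
  ring

theorem differentiable_fderiv_twoLayerResidual_apply (e : (m × h) ⊕ (h × n) → ℝ) :
    Differentiable ℝ (fun v => fderiv ℝ (twoLayerResidual x y i) v e) := by
  simp_rw [fderiv_twoLayerResidual_apply]
  fun_prop

theorem fderiv_fderiv_twoLayerResidual_apply (θ e : (m × h) ⊕ (h × n) → ℝ) :
    fderiv ℝ (fun v => fderiv ℝ (twoLayerResidual x y i) v e) θ e
      = 2 * ∑ a, e (.inl (i, a)) * ∑ j, e (.inr (a, j)) * x j := by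
  simp_rw [fderiv_twoLayerResidual_apply]
  simp (disch := fun_prop) only [fderiv_fun_sum, fderiv_fun_add, fderiv_fun_mul, fderiv_apply,
    fderiv_fun_id, fderiv_fun_const, _root_.sum_apply, _root_.add_apply, _root_.smul_apply,
    ContinuousLinearMap.comp_id, ContinuousLinearMap.comp_zero, ContinuousLinearMap.proj_apply,
    Pi.zero_apply, _root_.zero_apply, smul_eq_mul, mul_zero, zero_add, add_zero,
    Finset.sum_const_zero]
  rw [Finset.mul_sum]
  refine Finset.sum_congr rfl fun a _ => ?_
  simp only [mul_comm (x _)]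
  ring

variable [DecidableEq m] [DecidableEq h] [DecidableEq n]

theorem fderiv_fderiv_twoLayerResidual_single (p : (m × h) ⊕ (h × n))
    (θ : (m × h) ⊕ (h × n) → ℝ) :
    fderiv ℝ (fun v => fderiv ℝ (twoLayerResidual x y i) v (Pi.single p 1)) θ (Pi.single p 1)
      = 0 := by
  rw [fderiv_fderiv_twoLayerResidual_apply]
  rcases p with p | p <;> simp [Pi.single_apply]

theorem fderiv_twoLayerResidual_single_inl (v : (m × h) ⊕ (h × n) → ℝ) (i₀ : m) (a₀ : h) :
    fderiv ℝ (twoLayerResidual x y i) v (Pi.single (.inl (i₀, a₀)) 1)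
      = if i = i₀ then ∑ j, v (.inr (a₀, j)) * x j else 0 := by
  rw [fderiv_twoLayerResidual_apply]
  by_cases hi : i = i₀ <;> simp [Pi.single_apply, hi]

theorem fderiv_twoLayerResidual_single_inr (v : (m × h) ⊕ (h × n) → ℝ) (a₀ : h) (j₀ : n) :
    fderiv ℝ (twoLayerResidual x y i) v (Pi.single (.inr (a₀, j₀)) 1)
      = v (.inl (i, a₀)) * x j₀ := by
  rw [fderiv_twoLayerResidual_apply]
  simp [Pi.single_apply, ite_and, Finset.mul_sum]

end TwoLayerResidual

section TwoLayerLoss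

variable {Z m h n : Type*} [Fintype Z] [Fintype m] [Fintype h] [Fintype n]

noncomputable def twoLayerLoss (x : Z → n → ℝ) (y : Z → m → ℝ)
    (θ : (m × h) ⊕ (h × n) → ℝ) : ℝ :=
  (Fintype.card Z : ℝ)⁻¹ * ∑ z, ∑ i, twoLayerResidual (x z) (y z i) i θ ^ 2

variable [DecidableEq m] [DecidableEq h] [DecidableEq n] (x : Z → n → ℝ) (y : Z → m → ℝ)

theorem fderiv_fderiv_twoLayerLoss_single (p : (m × h) ⊕ (h × n))
    (θ : (m × h) ⊕ (h × n) → ℝ) :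
    fderiv ℝ (fun v => fderiv ℝ (twoLayerLoss x y) v (Pi.single p 1)) θ (Pi.single p 1)
      = (Fintype.card Z : ℝ)⁻¹ * ∑ z, ∑ i,
          2 * fderiv ℝ (twoLayerResidual (x z) (y z i) i) θ (Pi.single p 1) ^ 2 := by
  have hGaussNewton := fderiv_fderiv_apply_const_mul_sum_sq (Fintype.card Z : ℝ)⁻¹
    (fun k : Z × m => twoLayerResidual (x k.1) (y k.1 k.2) k.2) θ (Pi.single p 1)
    (fun _ => differentiable_twoLayerResidual _ _ _)
    (fun _ => (differentiable_fderiv_twoLayerResidual_apply _ _ _ _).differentiableAt)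
  simp only [fderiv_fderiv_twoLayerResidual_single, mul_zero, add_zero,
    ← Finset.univ_product_univ, Finset.sum_product] at hGaussNewton
  exact hGaussNewton

variable (U : m → h → ℝ) (W : h → n → ℝ)

theorem sum_fderiv_fderiv_twoLayerLoss_inl :
    ∑ p : m × h, fderiv ℝ (fun v => fderiv ℝ (twoLayerLoss x y) v (Pi.single (.inl p) 1))
        (Sum.elim (fun p => U p.1 p.2) (fun p => W p.1 p.2)) (Pi.single (.inl p) 1)
      = 2 * (Fintype.card m * ((Fintype.card Z : ℝ)⁻¹
          * ∑ z, (of W *ᵥ x z) ⬝ᵥ (of W *ᵥ x z))) := by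
  simp only [Fintype.sum_prod_type, fderiv_fderiv_twoLayerLoss_single,
    fderiv_twoLayerResidual_single_inl, Sum.elim_inr, ite_pow, ne_eq, OfNat.ofNat_ne_zero,
    not_false_eq_true, zero_pow, Finset.sum_ite_eq', Finset.mem_univ, if_true,
    Finset.sum_const, Finset.card_univ, nsmul_eq_mul, dotProduct, mulVec, of_apply, ← sq,
    ← Finset.mul_sum]
  rw [Finset.sum_comm]
  ring

theorem sum_fderiv_fderiv_twoLayerLoss_inr :
    ∑ q : h × n, fderiv ℝ (fun v => fderiv ℝ (twoLayerLoss x y) v (Pi.single (.inr q) 1))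
        (Sum.elim (fun p => U p.1 p.2) (fun p => W p.1 p.2)) (Pi.single (.inr q) 1)
      = 2 * ((∑ i, ∑ a, U i a ^ 2) * ((Fintype.card Z : ℝ)⁻¹ * ∑ z, x z ⬝ᵥ x z)) := by
  simp only [Fintype.sum_prod_type, fderiv_fderiv_twoLayerLoss_single,
    fderiv_twoLayerResidual_single_inr, Sum.elim_inl, dotProduct, mul_pow, ← Finset.mul_sum,
    ← Finset.sum_mul]
  rw [Finset.sum_comm (f := fun a i => U i a ^ 2), Finset.sum_comm (f := fun j z => x z j ^ 2)]
  simp only [sq]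
  ring

end TwoLayerLoss

section SecondMoment

variable {R Z m n : Type*} [CommSemiring R] [Fintype Z]

theorem of_mul_sum_mul_eq_smul_sum_vecMulVec (c : R) (x : Z → n → R) :
    of (fun a b => c * ∑ z, x z a * x z b) = c • ∑ z, vecMulVec (x z) (x z) := by
  ext a b
  simp [vecMulVec_apply, Matrix.sum_apply]

variable [Fintype m] [Fintype n]

theorem trace_smul_sum_vecMulVec (c : R) (x : Z → n → R) :
    (c • ∑ z, vecMulVec (x z) (x z)).trace = c * ∑ z, x z ⬝ᵥ x z := by
  simp [trace_sum]

theorem trace_mul_smul_sum_vecMulVec_mul_transpose (A : Matrix m n R) (c : R) (x : Z → n → R) :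
    (A * (c • ∑ z, vecMulVec (x z) (x z)) * Aᵀ).trace
      = c * ∑ z, (A *ᵥ x z) ⬝ᵥ (A *ᵥ x z) := by
  simp only [Matrix.mul_smul, Matrix.smul_mul, Matrix.mul_sum, Matrix.sum_mul, trace_smul,
    trace_sum, mul_vecMulVec, vecMulVec_mul, vecMul_transpose, trace_vecMulVec, smul_eq_mul]

end SecondMoment

theorem two_layer_hessian_trace_general {dx dy d : ℕ} {Z : Type*} [Fintype Z]
    (x : Z → Fin dx → ℝ) (y : Z → Fin dy → ℝ)
    (U : Fin dy → Fin d → ℝ) (W : Fin d → Fin dx → ℝ)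
    (L : (((Fin dy × Fin d) ⊕ (Fin d × Fin dx)) → ℝ) → ℝ)
    (hL : ∀ θ : ((Fin dy × Fin d) ⊕ (Fin d × Fin dx)) → ℝ,
      L θ = (Fintype.card Z : ℝ)⁻¹ * ∑ z : Z, ∑ i : Fin dy,
        ((∑ a : Fin d, θ (Sum.inl (i, a)) * ∑ j : Fin dx, θ (Sum.inr (a, j)) * x z j)
          - y z i) ^ 2)
    (θ₀ : ((Fin dy × Fin d) ⊕ (Fin d × Fin dx)) → ℝ)
    (hθ₀ : θ₀ = Sum.elim (fun p => U p.1 p.2) (fun p => W p.1 p.2))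
    (Sx : Matrix (Fin dx) (Fin dx) ℝ)
    (hSx : Sx = Matrix.of fun a b => (Fintype.card Z : ℝ)⁻¹ * ∑ z : Z, x z a * x z b) :
    ∑ p : (Fin dy × Fin d) ⊕ (Fin d × Fin dx),
        fderiv ℝ (fun v => fderiv ℝ L v (Pi.single p 1)) θ₀ (Pi.single p 1)
      = 2 * ((dy : ℝ) * (Matrix.of W * Sx * (Matrix.of W)ᵀ).trace
          + (∑ i, ∑ a, (U i a) ^ 2) * Sx.trace) := by
  obtain rfl : L = twoLayerLoss x y := funext hL
  subst hθ₀ hSx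
  rw [Fintype.sum_sum_type, sum_fderiv_fderiv_twoLayerLoss_inl, sum_fderiv_fderiv_twoLayerLoss_inr,
    of_mul_sum_mul_eq_smul_sum_vecMulVec, trace_smul_sum_vecMulVec,
    trace_mul_smul_sum_vecMulVec_mul_transpose, Fintype.card_fin]
  ring

/-- Hessian trace of the two-layer linear network loss (Proposition 5.2): for
`L(U,W) = E[‖UWx − y‖²]` viewed as a function of the vectorized parameters `(U, W)`,
the trace of the Hessian equals `2(d_y Tr[WΣ_xWᵀ] + ‖U‖_F² Tr[Σ_x])`, where `Σ_x = E[xxᵀ]`. -/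
theorem two_layer_hessian_trace {dx dy d : ℕ} {Z : Type*} [Fintype Z] [Nonempty Z]
    (x : Z → Fin dx → ℝ) (y : Z → Fin dy → ℝ)
    (U : Fin dy → Fin d → ℝ) (W : Fin d → Fin dx → ℝ)
    (L : (((Fin dy × Fin d) ⊕ (Fin d × Fin dx)) → ℝ) → ℝ)
    (hL : ∀ θ : ((Fin dy × Fin d) ⊕ (Fin d × Fin dx)) → ℝ,
      L θ = (Fintype.card Z : ℝ)⁻¹ * ∑ z : Z, ∑ i : Fin dy,
        ((∑ a : Fin d, θ (Sum.inl (i, a)) * ∑ j : Fin dx, θ (Sum.inr (a, j)) * x z j)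
          - y z i) ^ 2)
    (θ₀ : ((Fin dy × Fin d) ⊕ (Fin d × Fin dx)) → ℝ)
    (hθ₀ : θ₀ = Sum.elim (fun p => U p.1 p.2) (fun p => W p.1 p.2))
    (Sx : Matrix (Fin dx) (Fin dx) ℝ)
    (hSx : Sx = Matrix.of fun a b => (Fintype.card Z : ℝ)⁻¹ * ∑ z : Z, x z a * x z b) :
    ∑ p : (Fin dy × Fin d) ⊕ (Fin d × Fin dx),
        fderiv ℝ (fun v => fderiv ℝ L v (Pi.single p 1)) θ₀ (Pi.single p 1)
      = 2 * ((dy : ℝ) * (Matrix.of W * Sx * (Matrix.of W)ᵀ).trace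
          + (∑ i, ∑ a, (U i a) ^ 2) * Sx.trace) :=
  two_layer_hessian_trace_general x y U W L hL θ₀ hθ₀ Sx hSx
end

section
/- Exponential decay of the imbalance for rank-one matrix factorization: let Z be a finite dataset of scalar pairs (x_z, y_z) ∈ ℝ × ℝ, let u, w ∈ ℝ^d, and for each z set ℓ_z = (⟨u, w⟩ x_z − y_z)² and r_z = ⟨u, w⟩ x_z − y_z. Define the gradient covariances Σ_u = E[∇_u ℓ (∇_u ℓ)^⊤] − E[∇_u ℓ] E[∇_u ℓ]^⊤ and Σ_w = E[∇_w ℓ (∇_w ℓ)^⊤] − E[∇_w ℓ] E[∇_w ℓ]^⊤, and Var[r x] = E[(r x)²] − (E[r x])². Then Σ_u = 4 Var[r x] · w w^⊤ and Σ_w = 4 Var[r x] · u u^⊤, and for every symmetric B ∈ ℝ^{d×d}: Tr[Σ_u B] − Tr[Σ_w B] = −4 Var[r x] · (u^⊤ B u − w^⊤ B w). -/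
/-!
Every per-sample gradient is rank one, `∇_u ℓ_z = (2 r_z x_z) w` and `∇_w ℓ_z = (2 r_z x_z) u`.
Since the empirical covariance is bilinear, both gradient covariances are the scalar
`Var[2rx] = 4 Var[rx]` times `w wᵀ`, resp. `u uᵀ`, and the trace identity follows from
`Tr[v wᵀ B] = wᵀ B v`.
-/

open Matrix

section Gradient

variable {E : Type*} [NormedAddCommGroup E] [NormedSpace ℝ E]

theorem hasFDerivAt_sq_affine (L : E →L[ℝ] ℝ) (x y : ℝ) (u : E) :
    HasFDerivAt (fun v => (L v * x - y) ^ 2) ((2 * (L u * x - y) * x) • L) u := by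
  have hφ : HasDerivAt (fun t : ℝ => (t * x - y) ^ 2) (2 * (L u * x - y) * x) (L u) :=
    ((((hasDerivAt_id (L u)).mul_const x).sub_const y).pow 2).congr_deriv
      (by simp only [id_eq]; ring)
  exact hφ.comp_hasFDerivAt u L.hasFDerivAt

end Gradient

section DotProduct

variable {n : Type*} [Fintype n]

theorem trace_vecMulVec_mul (u v : n → ℝ) (B : Matrix n n ℝ) :
    (vecMulVec u v * B).trace = v ⬝ᵥ B *ᵥ u := by
  rw [vecMulVec_mul, trace_vecMulVec, dotProduct_comm, dotProduct_mulVec]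

variable [DecidableEq n]

theorem fderiv_sq_dotProduct_right (u w : n → ℝ) (x y : ℝ) (a : n) :
    fderiv ℝ (fun v => (u ⬝ᵥ v * x - y) ^ 2) w (Pi.single a 1)
      = 2 * (u ⬝ᵥ w * x - y) * x * u a := by
  let L : (n → ℝ) →L[ℝ] ℝ := LinearMap.toContinuousLinearMap (dotProductEquiv ℝ n u)
  have hL : ∀ v, L v = u ⬝ᵥ v := fun v => rfl
  change fderiv ℝ (fun v => (L v * x - y) ^ 2) w (Pi.single a 1) = _
  rw [(hasFDerivAt_sq_affine L x y w).fderiv]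
  simp [hL]

theorem fderiv_sq_dotProduct_left (u w : n → ℝ) (x y : ℝ) (a : n) :
    fderiv ℝ (fun v => (v ⬝ᵥ w * x - y) ^ 2) u (Pi.single a 1)
      = 2 * (u ⬝ᵥ w * x - y) * x * w a := by
  simp only [dotProduct_comm _ w]
  exact fderiv_sq_dotProduct_right w u x y a

end DotProduct

section EmpiricalCovariance

variable {Z : Type*} [Fintype Z]

noncomputable def empiricalCov (f g : Z → ℝ) : ℝ :=
  (Fintype.card Z : ℝ)⁻¹ * ∑ z, f z * g z
    - ((Fintype.card Z : ℝ)⁻¹ * ∑ z, f z) * ((Fintype.card Z : ℝ)⁻¹ * ∑ z, g z)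

theorem empiricalCov_const_mul (p q : ℝ) (f g : Z → ℝ) :
    empiricalCov (fun z => p * f z) (fun z => q * g z) = p * q * empiricalCov f g := by
  have hprod : ∀ z, p * f z * (q * g z) = p * q * (f z * g z) := fun z => by ring
  simp only [empiricalCov, hprod, ← Finset.mul_sum]
  ring

theorem of_empiricalCov_mul_left {n : Type*} (v : n → ℝ) (s : Z → ℝ) :
    Matrix.of (fun a b => empiricalCov (fun z => v a * s z) (fun z => v b * s z))
      = empiricalCov s s • vecMulVec v v := by
  ext a b
  simp [empiricalCov_const_mul, vecMulVec_apply, mul_comm]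

end EmpiricalCovariance

theorem rank_one_imbalance_decay_general {d : ℕ} {Z : Type*} [Fintype Z]
    (x y : Z → ℝ) (u w : Fin d → ℝ)
    (r : Z → ℝ) (hr : ∀ z, r z = (∑ i, u i * w i) * x z - y z)
    (gu gw : Z → Fin d → ℝ)
    (hgu : ∀ (z : Z) (a : Fin d), gu z a
      = fderiv ℝ (fun u' : Fin d → ℝ => ((∑ i, u' i * w i) * x z - y z) ^ 2) u (Pi.single a 1))
    (hgw : ∀ (z : Z) (a : Fin d), gw z a
      = fderiv ℝ (fun w' : Fin d → ℝ => ((∑ i, u i * w' i) * x z - y z) ^ 2) w (Pi.single a 1))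
    (Su Sw : Matrix (Fin d) (Fin d) ℝ)
    (hSu : Su = Matrix.of fun a b =>
      (Fintype.card Z : ℝ)⁻¹ * ∑ z : Z, gu z a * gu z b
        - ((Fintype.card Z : ℝ)⁻¹ * ∑ z : Z, gu z a)
          * ((Fintype.card Z : ℝ)⁻¹ * ∑ z : Z, gu z b))
    (hSw : Sw = Matrix.of fun a b =>
      (Fintype.card Z : ℝ)⁻¹ * ∑ z : Z, gw z a * gw z b
        - ((Fintype.card Z : ℝ)⁻¹ * ∑ z : Z, gw z a)
          * ((Fintype.card Z : ℝ)⁻¹ * ∑ z : Z, gw z b))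
    (VarRx : ℝ)
    (hVar : VarRx = (Fintype.card Z : ℝ)⁻¹ * ∑ z : Z, (r z * x z) ^ 2
        - ((Fintype.card Z : ℝ)⁻¹ * ∑ z : Z, r z * x z) ^ 2) :
    Su = (4 * VarRx) • Matrix.of (fun a b => w a * w b)
      ∧ Sw = (4 * VarRx) • Matrix.of (fun a b => u a * u b)
      ∧ ∀ B : Matrix (Fin d) (Fin d) ℝ, B.IsSymm →
          (Su * B).trace - (Sw * B).trace
            = -4 * VarRx * (u ⬝ᵥ B.mulVec u - w ⬝ᵥ B.mulVec w) := by
  set s : Z → ℝ := fun z => 2 * (r z * x z)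
  have hVar_s : empiricalCov s s = 4 * VarRx := by
    rw [empiricalCov_const_mul, hVar, empiricalCov]
    simp only [sq]
    ring
  have hgu_s : ∀ z a, gu z a = w a * s z := fun z a => by
    rw [hgu]
    exact (fderiv_sq_dotProduct_left u w (x z) (y z) a).trans
      (by simp only [s, hr, dotProduct]; ring)
  have hgw_s : ∀ z a, gw z a = u a * s z := fun z a => by
    rw [hgw]
    exact (fderiv_sq_dotProduct_right u w (x z) (y z) a).trans
      (by simp only [s, hr, dotProduct]; ring)
  have hSu_s : Su = (4 * VarRx) • vecMulVec w w := by
    rw [hSu, ← hVar_s, ← of_empiricalCov_mul_left]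
    simp only [hgu_s, empiricalCov]
  have hSw_s : Sw = (4 * VarRx) • vecMulVec u u := by
    rw [hSw, ← hVar_s, ← of_empiricalCov_mul_left]
    simp only [hgw_s, empiricalCov]
  refine ⟨hSu_s, hSw_s, fun B _ => ?_⟩
  rw [hSu_s, hSw_s, smul_mul, smul_mul, trace_smul, trace_smul, trace_vecMulVec_mul,
    trace_vecMulVec_mul, smul_eq_mul, smul_eq_mul]
  ring

/-- Exponential decay of the imbalance for rank-one matrix factorization: for
`ℓ_z = (⟨u,w⟩x_z − y_z)²` with per-sample gradient covariances `Σ_u`, `Σ_w` and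
`Var[rx] = E[(rx)²] − (E[rx])²`, one has `Σ_u = 4Var[rx]·wwᵀ`, `Σ_w = 4Var[rx]·uuᵀ`, and for
every symmetric `B`, `Tr[Σ_uB] − Tr[Σ_wB] = −4Var[rx]·(uᵀBu − wᵀBw)`. -/
theorem rank_one_imbalance_decay {d : ℕ} {Z : Type*} [Fintype Z] [Nonempty Z]
    (x y : Z → ℝ) (u w : Fin d → ℝ)
    (r : Z → ℝ) (hr : ∀ z, r z = (∑ i, u i * w i) * x z - y z)
    (gu gw : Z → Fin d → ℝ)
    (hgu : ∀ (z : Z) (a : Fin d), gu z a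
      = fderiv ℝ (fun u' : Fin d → ℝ => ((∑ i, u' i * w i) * x z - y z) ^ 2) u (Pi.single a 1))
    (hgw : ∀ (z : Z) (a : Fin d), gw z a
      = fderiv ℝ (fun w' : Fin d → ℝ => ((∑ i, u i * w' i) * x z - y z) ^ 2) w (Pi.single a 1))
    (Su Sw : Matrix (Fin d) (Fin d) ℝ)
    (hSu : Su = Matrix.of fun a b =>
      (Fintype.card Z : ℝ)⁻¹ * ∑ z : Z, gu z a * gu z b
        - ((Fintype.card Z : ℝ)⁻¹ * ∑ z : Z, gu z a)
          * ((Fintype.card Z : ℝ)⁻¹ * ∑ z : Z, gu z b))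
    (hSw : Sw = Matrix.of fun a b =>
      (Fintype.card Z : ℝ)⁻¹ * ∑ z : Z, gw z a * gw z b
        - ((Fintype.card Z : ℝ)⁻¹ * ∑ z : Z, gw z a)
          * ((Fintype.card Z : ℝ)⁻¹ * ∑ z : Z, gw z b))
    (VarRx : ℝ)
    (hVar : VarRx = (Fintype.card Z : ℝ)⁻¹ * ∑ z : Z, (r z * x z) ^ 2
        - ((Fintype.card Z : ℝ)⁻¹ * ∑ z : Z, r z * x z) ^ 2) :
    Su = (4 * VarRx) • Matrix.of (fun a b => w a * w b)
      ∧ Sw = (4 * VarRx) • Matrix.of (fun a b => u a * u b)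
      ∧ ∀ B : Matrix (Fin d) (Fin d) ℝ, B.IsSymm →
          (Su * B).trace - (Sw * B).trace
            = -4 * VarRx * (u ⬝ᵥ B.mulVec u - w ⬝ᵥ B.mulVec w) :=
  rank_one_imbalance_decay_general x y u w r hr gu gw hgu hgw Su Sw hSu hSw VarRx hVar
end

section
/- Noise-equilibrium characterization for deep linear networks (Theorem E): let Z be a finite dataset of pairs (x_z, y_z) ∈ ℝ^{d_x} × ℝ^{d_y}, let W_1, …, W_D be matrices of compatible dimensions, and for each z set r_z = W_D ⋯ W_1 x_z − y_z and ℓ_z = ‖W_D ⋯ W_1 x_z − y_z‖². Fix 1 ≤ i ≤ D−1 and set ξ_{i+1} = W_D ⋯ W_{i+2} (the identity when i = D−1), h_i = W_{i−1} ⋯ W_1 (the identity when i = 1), C_0^i = E[‖h_i x‖² r r^⊤] and C_1^i = E[‖ξ_{i+1}^⊤ r‖² x x^⊤]. Then for every symmetric matrix B of the appropriate size: E[Tr[(∇_{W_{i+1}} ℓ) B (∇_{W_{i+1}} ℓ)^⊤]] = 4 Tr[W_i h_i C_1^i h_i^⊤ W_i^⊤ B] and E[Tr[(∇_{W_i} ℓ)^⊤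 B (∇_{W_i} ℓ)]] = 4 Tr[W_{i+1}^⊤ ξ_{i+1}^⊤ C_0^i ξ_{i+1} W_{i+1} B]; consequently, these two expected traces are equal for every symmetric B if and only if W_{i+1}^⊤ ξ_{i+1}^⊤ C_0^i ξ_{i+1} W_{i+1} = W_i h_i C_1^i h_i^⊤ W_i^⊤. -/
/-!
Each per-sample gradient is a rank-one matrix: `∇_{W_{i+1}} ℓ = 2 (ξᵀ r) (W_i h x)ᵀ` and
`∇_{W_i} ℓ = 2 (W_{i+1}ᵀ ξᵀ r) (h x)ᵀ`. For a rank-one `u vᵀ`,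
`Tr[(u vᵀ) B (u vᵀ)ᵀ] = ‖u‖² vᵀ B v`, so averaging over the data turns the expected traces into
`Tr[N C Nᵀ B]`, where `C` is the `‖u‖²`-weighted second moment of the data vectors and `v = N x`;
this gives both trace formulas. Both `W_{i+1}ᵀ ξᵀ C₀ ξ W_{i+1}` and `W_i h C₁ hᵀ W_iᵀ` are
symmetric, and two symmetric matrices with equal traces against every symmetric `B` are equal:
take `B` to be their difference.
-/

open Matrix

section

variable {ι n m κ Z R : Type*}

theorem fderiv_sum_sq_sub_apply [Fintype ι] {E : Type*} [NormedAddCommGroup E]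
    [NormedSpace ℝ E] (L : E →L[ℝ] ι → ℝ) (y : ι → ℝ) (W D : E) :
    fderiv ℝ (fun A => ∑ i, (L A i - y i) ^ 2) W D = 2 * ∑ i, (L W i - y i) * L D i := by
  have hL : HasFDerivAt (fun A => ∑ i, (L A i - y i) ^ 2)
      (∑ i, (2 * (L W i - y i)) • (ContinuousLinearMap.proj i).comp L) W :=
    HasFDerivAt.fun_sum fun i _ => by
      simpa using ((ContinuousLinearMap.proj i).comp L).hasFDerivAt.sub_const (y i) |>.pow 2
  simp only [hL.fderiv, _root_.sum_apply, _root_.smul_apply, ContinuousLinearMap.comp_apply,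
    ContinuousLinearMap.proj_apply, smul_eq_mul, Finset.mul_sum, mul_assoc]

theorem mul_single_one_mul_mulVec_apply [Fintype n] [Fintype m] [Fintype κ] [DecidableEq n]
    [DecidableEq m] [CommSemiring R] (M : Matrix ι n R) (N : Matrix m κ R) (v : κ → R)
    (a : n) (b : m) (i : ι) :
    ((M * single a b (1 : R) * N) *ᵥ v) i = M i a * (N *ᵥ v) b := by
  simp [single_eq_single_vecMulVec_single, mul_vecMulVec, vecMulVec_mul, vecMulVec_mulVec]
  rfl

theorem fderiv_sum_sq_mul_of_mul_mulVec_sub_apply_single [Fintype ι] [Fintype n] [Fintype m]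
    [Fintype κ] [DecidableEq n] [DecidableEq m]
    (M : Matrix ι n ℝ) (N : Matrix m κ ℝ) (v : κ → ℝ) (y : ι → ℝ) (W : n → m → ℝ)
    (a : n) (b : m) :
    fderiv ℝ (fun A : n → m → ℝ => ∑ i, (((M * of A * N) *ᵥ v) i - y i) ^ 2) W
        (Pi.single a (Pi.single b 1))
      = 2 * (Mᵀ *ᵥ ((M * of W * N) *ᵥ v - y)) a * (N *ᵥ v) b := by
  let L : (n → m → ℝ) →ₗ[ℝ] ι → ℝ :=
    { toFun := fun A => (M * of A * N) *ᵥ v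
      map_add' := fun A A' => by rw [← of_add_of, Matrix.mul_add, Matrix.add_mul, add_mulVec]
      map_smul' := fun c A => by
        rw [← smul_of, Matrix.mul_smul, Matrix.smul_mul, smul_mulVec]; rfl }
  have hsingle : of (Pi.single a (Pi.single b 1)) = single a b (1 : ℝ) := by
    rw [single_eq_single_vecMulVec_single]
    ext a' b'
    by_cases ha : a' = a <;> simp [vecMulVec_apply, Pi.single_apply, ha]
  refine (fderiv_sum_sq_sub_apply L.toContinuousLinearMap y W _).trans ?_
  simp only [LinearMap.coe_toContinuousLinearMap', LinearMap.coe_mk, AddHom.coe_mk, L, hsingle,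
    mul_single_one_mul_mulVec_apply, mulVec_transpose, vecMul, dotProduct, Pi.sub_apply,
    Finset.mul_sum, Finset.sum_mul, mul_assoc]

theorem trace_smul_vecMulVec_mul_mul_transpose [Fintype ι] [Fintype n] [CommSemiring R]
    (k : R) (u : ι → R) (v : n → R) (B : Matrix n n R) :
    (k • vecMulVec u v * B * (k • vecMulVec u v)ᵀ).trace
      = k ^ 2 * (u ⬝ᵥ u) * (v ⬝ᵥ B *ᵥ v) := by
  rw [transpose_smul, smul_mul, Matrix.mul_smul, smul_mul, trace_smul, trace_smul,
    transpose_vecMulVec, vecMulVec_mul, vecMulVec_mul_vecMulVec, trace_vecMulVec,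
    dotProduct_smul, dotProduct_mulVec]
  simp only [smul_eq_mul]
  ring

theorem trace_mul_vecMulVec_mul_transpose_mul [Fintype n] [Fintype κ] [CommSemiring R]
    (N : Matrix n κ R) (x : κ → R) (B : Matrix n n R) :
    (N * vecMulVec x x * Nᵀ * B).trace = (N *ᵥ x) ⬝ᵥ B *ᵥ (N *ᵥ x) := by
  rw [mul_vecMulVec, vecMulVec_mul, vecMul_transpose, vecMulVec_mul, trace_vecMulVec,
    dotProduct_comm, ← dotProduct_mulVec]

theorem trace_mul_smul_sum_smul_vecMulVec_mul_transpose_mul [Fintype n] [Fintype κ] [Fintype Z]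
    [CommSemiring R] (N : Matrix n κ R) (c : R) (S : Z → R) (x : Z → κ → R)
    (B : Matrix n n R) :
    (N * (c • ∑ z, S z • vecMulVec (x z) (x z)) * Nᵀ * B).trace
      = c * ∑ z, S z * ((N *ᵥ x z) ⬝ᵥ B *ᵥ (N *ᵥ x z)) := by
  simp only [Matrix.mul_sum, Matrix.sum_mul, trace_sum, Matrix.mul_smul, Matrix.smul_mul,
    trace_smul, trace_mul_vecMulVec_mul_transpose_mul, smul_eq_mul, Finset.mul_sum]

theorem mul_sum_trace_smul_vecMulVec_mul_mul_transpose [Fintype ι] [Fintype n] [Fintype κ]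
    [Fintype Z] [CommSemiring R] (c k : R) (u : Z → ι → R) (N : Matrix n κ R)
    (x : Z → κ → R) (B : Matrix n n R) :
    c * ∑ z, (k • vecMulVec (u z) (N *ᵥ x z) * B * (k • vecMulVec (u z) (N *ᵥ x z))ᵀ).trace
      = k ^ 2 * (N * (c • ∑ z, (∑ i, u z i ^ 2) • vecMulVec (x z) (x z)) * Nᵀ * B).trace := by
  simp only [trace_smul_vecMulVec_mul_mul_transpose,
    trace_mul_smul_sum_smul_vecMulVec_mul_transpose_mul, Finset.mul_sum]
  refine Finset.sum_congr rfl fun z _ => ?_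
  rw [show u z ⬝ᵥ u z = ∑ i, u z i ^ 2 by simp only [dotProduct, sq]]
  ring

theorem of_mul_sum_mul_mul_eq_smul_sum_smul_vecMulVec [Fintype Z] [CommSemiring R] (c : R)
    (S : Z → R) (x : Z → κ → R) :
    of (fun a b => c * ∑ z, S z * x z a * x z b) = c • ∑ z, S z • vecMulVec (x z) (x z) := by
  ext a b
  simp [Matrix.sum_apply, vecMulVec_apply, mul_assoc]

theorem isSymm_smul_sum_smul_vecMulVec [Fintype Z] [CommSemiring R] (c : R) (S : Z → R)
    (x : Z → κ → R) : (c • ∑ z, S z • vecMulVec (x z) (x z)).IsSymm := by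
  simp [IsSymm, transpose_sum, transpose_vecMulVec]

theorem Matrix.IsSymm.mul_mul_transpose [Fintype κ] [CommSemiring R] {C : Matrix κ κ R}
    (hC : C.IsSymm) (N : Matrix n κ R) : (N * C * Nᵀ).IsSymm := by
  simp [IsSymm, transpose_mul, hC.eq, Matrix.mul_assoc]

theorem Matrix.IsSymm.forall_isSymm_trace_mul_eq_iff [Fintype n] {P Q : Matrix n n ℝ}
    (hP : P.IsSymm) (hQ : Q.IsSymm) :
    (∀ B : Matrix n n ℝ, B.IsSymm → (P * B).trace = (Q * B).trace) ↔ P = Q := by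
  refine ⟨fun h => ?_, fun h _ _ => h ▸ rfl⟩
  have hD : (P - Q).IsSymm := hP.sub hQ
  have hDD : ((P - Q)ᴴ * (P - Q)).trace = 0 := by
    rw [conjTranspose_eq_transpose_of_trivial, hD.eq, Matrix.sub_mul, trace_sub, h _ hD,
      sub_self]
  exact sub_eq_zero.mp (trace_conjTranspose_mul_self_eq_zero_iff.mp hDD)

end

theorem deep_linear_noise_equilibrium_general {dx dy p q s : ℕ} {Z : Type*} [Fintype Z]
    (x : Z → Fin dx → ℝ) (y : Z → Fin dy → ℝ)
    (xi : Matrix (Fin dy) (Fin p) ℝ) (W1 : Matrix (Fin p) (Fin q) ℝ)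
    (W0 : Matrix (Fin q) (Fin s) ℝ) (h : Matrix (Fin s) (Fin dx) ℝ)
    (r : Z → Fin dy → ℝ)
    (hr : ∀ z, r z = (xi * W1 * W0 * h).mulVec (x z) - y z)
    (ℓ : Z → (Fin p → Fin q → ℝ) → (Fin q → Fin s → ℝ) → ℝ)
    (hℓ : ∀ z A1 A0, ℓ z A1 A0
      = ∑ i, ((xi * Matrix.of A1 * Matrix.of A0 * h).mulVec (x z) i - y z i) ^ 2)
    (G1 : Z → Matrix (Fin p) (Fin q) ℝ)
    (hG1 : ∀ (z : Z) (a : Fin p) (b : Fin q), G1 z a b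
      = fderiv ℝ (fun A1 => ℓ z A1 (fun c e => W0 c e)) (fun a b => W1 a b)
          (Pi.single a (Pi.single b 1)))
    (G0 : Z → Matrix (Fin q) (Fin s) ℝ)
    (hG0 : ∀ (z : Z) (b : Fin q) (c : Fin s), G0 z b c
      = fderiv ℝ (fun A0 => ℓ z (fun a b => W1 a b) A0) (fun c e => W0 c e)
          (Pi.single b (Pi.single c 1)))
    (C0 : Matrix (Fin dy) (Fin dy) ℝ)
    (hC0 : C0 = Matrix.of fun i i' => (Fintype.card Z : ℝ)⁻¹
        * ∑ z : Z, (∑ a, (h.mulVec (x z) a) ^ 2) * r z i * r z i')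
    (C1 : Matrix (Fin dx) (Fin dx) ℝ)
    (hC1 : C1 = Matrix.of fun a b => (Fintype.card Z : ℝ)⁻¹
        * ∑ z : Z, (∑ i, (xiᵀ.mulVec (r z) i) ^ 2) * x z a * x z b) :
    (∀ B : Matrix (Fin q) (Fin q) ℝ, B.IsSymm →
        ((Fintype.card Z : ℝ)⁻¹ * ∑ z : Z, (G1 z * B * (G1 z)ᵀ).trace
            = 4 * (W0 * h * C1 * hᵀ * W0ᵀ * B).trace)
          ∧ ((Fintype.card Z : ℝ)⁻¹ * ∑ z : Z, ((G0 z)ᵀ * B * G0 z).trace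
            = 4 * (W1ᵀ * xiᵀ * C0 * xi * W1 * B).trace))
      ∧ ((∀ B : Matrix (Fin q) (Fin q) ℝ, B.IsSymm →
            (Fintype.card Z : ℝ)⁻¹ * ∑ z : Z, (G1 z * B * (G1 z)ᵀ).trace
              = (Fintype.card Z : ℝ)⁻¹ * ∑ z : Z, ((G0 z)ᵀ * B * G0 z).trace)
          ↔ W1ᵀ * xiᵀ * C0 * xi * W1 = W0 * h * C1 * hᵀ * W0ᵀ) := by
  have hG1' : ∀ z, G1 z = (2 : ℝ) • vecMulVec (xiᵀ *ᵥ r z) ((W0 * h) *ᵥ x z) := fun z => by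
    ext a b
    have hℓ1 : (fun A1 => ℓ z A1 fun c e => W0 c e)
        = fun A1 => ∑ i, (((xi * of A1 * (W0 * h)) *ᵥ x z) i - y z i) ^ 2 :=
      funext fun A1 => by rw [hℓ, Matrix.mul_assoc _ _ h]; rfl
    have hW1 : of (fun a b => W1 a b) = W1 := rfl
    rw [hG1, hℓ1, fderiv_sum_sq_mul_of_mul_mulVec_sub_apply_single, hr, hW1]
    simp [Matrix.mul_assoc, vecMulVec_apply, mul_assoc]
  have hG0' : ∀ z, G0 z = ((2 : ℝ) • vecMulVec (h *ᵥ x z) ((xi * W1)ᵀ *ᵥ r z))ᵀ := fun z => by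
    ext b c
    have hℓ0 : (fun A0 => ℓ z (fun a b => W1 a b) A0)
        = fun A0 => ∑ i, ((((xi * W1) * of A0 * h) *ᵥ x z) i - y z i) ^ 2 :=
      funext fun A0 => by rw [hℓ]; rfl
    have hW0 : of (fun c e => W0 c e) = W0 := rfl
    rw [hG0, hℓ0, fderiv_sum_sq_mul_of_mul_mulVec_sub_apply_single, hr, hW0]
    simp [Matrix.mul_assoc, vecMulVec_apply, mul_comm, mul_left_comm]
  set c : ℝ := (Fintype.card Z : ℝ)⁻¹
  have hC1' := hC1.trans (of_mul_sum_mul_mul_eq_smul_sum_smul_vecMulVec _ _ _)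
  have hC0' := hC0.trans (of_mul_sum_mul_mul_eq_smul_sum_smul_vecMulVec _ _ _)
  have hnoise1 : ∀ B, c * ∑ z, (G1 z * B * (G1 z)ᵀ).trace
      = 4 * ((W0 * h) * C1 * (W0 * h)ᵀ * B).trace := fun B => by
    simp only [hG1', mul_sum_trace_smul_vecMulVec_mul_mul_transpose, hC1']
    norm_num
  have hnoise0 : ∀ B, c * ∑ z, ((G0 z)ᵀ * B * G0 z).trace
      = 4 * ((xi * W1)ᵀ * C0 * (xi * W1)ᵀᵀ * B).trace := fun B => by
    simp only [hG0', transpose_transpose, mul_sum_trace_smul_vecMulVec_mul_mul_transpose, hC0']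
    norm_num
  have hQ : ((W0 * h) * C1 * (W0 * h)ᵀ).IsSymm :=
    hC1' ▸ (isSymm_smul_sum_smul_vecMulVec _ _ _).mul_mul_transpose _
  have hP : ((xi * W1)ᵀ * C0 * (xi * W1)ᵀᵀ).IsSymm :=
    hC0' ▸ (isSymm_smul_sum_smul_vecMulVec _ _ _).mul_mul_transpose _
  rw [show W0 * h * C1 * hᵀ * W0ᵀ = (W0 * h) * C1 * (W0 * h)ᵀ by
      simp only [transpose_mul, Matrix.mul_assoc],
    show W1ᵀ * xiᵀ * C0 * xi * W1 = (xi * W1)ᵀ * C0 * (xi * W1)ᵀᵀ by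
      simp only [transpose_mul, transpose_transpose, Matrix.mul_assoc]]
  refine ⟨fun B _ => ⟨hnoise1 B, hnoise0 B⟩, ?_⟩
  simp only [hnoise1, hnoise0, mul_right_inj' (four_ne_zero' ℝ)]
  exact (hQ.forall_isSymm_trace_mul_eq_iff hP).trans eq_comm

/-- Noise-equilibrium characterization for deep linear networks (Theorem E), stated for the
layer pair `(W_i, W_{i+1})` of the factorization `W_D ⋯ W_1 = ξ_{i+1} W_{i+1} W_i h_i`
(here `xi = ξ_{i+1} = W_D⋯W_{i+2}`, `W1 = W_{i+1}`, `W0 = W_i`, `h = h_i = W_{i-1}⋯W_1`, with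
`xi`/`h` the identity in the boundary cases): with `r = ξW_{i+1}W_ihx − y`,
`C₀ = E[‖hx‖²rrᵀ]`, `C₁ = E[‖ξᵀr‖²xxᵀ]`, for every symmetric `B`,
`E[Tr[(∇_{W_{i+1}}ℓ)B(∇_{W_{i+1}}ℓ)ᵀ]] = 4Tr[W_ih C₁ hᵀW_iᵀB]` and
`E[Tr[(∇_{W_i}ℓ)ᵀB(∇_{W_i}ℓ)]] = 4Tr[W_{i+1}ᵀξᵀC₀ξW_{i+1}B]`; consequently these expected
traces agree for all symmetric `B` iff `W_{i+1}ᵀξᵀC₀ξW_{i+1} = W_ih C₁ hᵀW_iᵀ`. -/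
theorem deep_linear_noise_equilibrium {dx dy p q s : ℕ} {Z : Type*} [Fintype Z] [Nonempty Z]
    (x : Z → Fin dx → ℝ) (y : Z → Fin dy → ℝ)
    (xi : Matrix (Fin dy) (Fin p) ℝ) (W1 : Matrix (Fin p) (Fin q) ℝ)
    (W0 : Matrix (Fin q) (Fin s) ℝ) (h : Matrix (Fin s) (Fin dx) ℝ)
    (r : Z → Fin dy → ℝ)
    (hr : ∀ z, r z = (xi * W1 * W0 * h).mulVec (x z) - y z)
    (ℓ : Z → (Fin p → Fin q → ℝ) → (Fin q → Fin s → ℝ) → ℝ)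
    (hℓ : ∀ z A1 A0, ℓ z A1 A0
      = ∑ i, ((xi * Matrix.of A1 * Matrix.of A0 * h).mulVec (x z) i - y z i) ^ 2)
    (G1 : Z → Matrix (Fin p) (Fin q) ℝ)
    (hG1 : ∀ (z : Z) (a : Fin p) (b : Fin q), G1 z a b
      = fderiv ℝ (fun A1 => ℓ z A1 (fun c e => W0 c e)) (fun a b => W1 a b)
          (Pi.single a (Pi.single b 1)))
    (G0 : Z → Matrix (Fin q) (Fin s) ℝ)
    (hG0 : ∀ (z : Z) (b : Fin q) (c : Fin s), G0 z b c
      = fderiv ℝ (fun A0 => ℓ z (fun a b => W1 a b) A0) (fun c e => W0 c e)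
          (Pi.single b (Pi.single c 1)))
    (C0 : Matrix (Fin dy) (Fin dy) ℝ)
    (hC0 : C0 = Matrix.of fun i i' => (Fintype.card Z : ℝ)⁻¹
        * ∑ z : Z, (∑ a, (h.mulVec (x z) a) ^ 2) * r z i * r z i')
    (C1 : Matrix (Fin dx) (Fin dx) ℝ)
    (hC1 : C1 = Matrix.of fun a b => (Fintype.card Z : ℝ)⁻¹
        * ∑ z : Z, (∑ i, (xiᵀ.mulVec (r z) i) ^ 2) * x z a * x z b) :
    (∀ B : Matrix (Fin q) (Fin q) ℝ, B.IsSymm →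
        ((Fintype.card Z : ℝ)⁻¹ * ∑ z : Z, (G1 z * B * (G1 z)ᵀ).trace
            = 4 * (W0 * h * C1 * hᵀ * W0ᵀ * B).trace)
          ∧ ((Fintype.card Z : ℝ)⁻¹ * ∑ z : Z, ((G0 z)ᵀ * B * G0 z).trace
            = 4 * (W1ᵀ * xiᵀ * C0 * xi * W1 * B).trace))
      ∧ ((∀ B : Matrix (Fin q) (Fin q) ℝ, B.IsSymm →
            (Fintype.card Z : ℝ)⁻¹ * ∑ z : Z, (G1 z * B * (G1 z)ᵀ).trace
              = (Fintype.card Z : ℝ)⁻¹ * ∑ z : Z, ((G0 z)ᵀ * B * G0 z).trace)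
          ↔ W1ᵀ * xiᵀ * C0 * xi * W1 = W0 * h * C1 * hᵀ * W0ᵀ) :=
  deep_linear_noise_equilibrium_general x y xi W1 W0 h r hr ℓ hℓ G1 hG1 G0 hG0 C0 hC0 C1 hC1
end
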